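/- arXiv:2006.02356 — 7 statements merged into one kernel-verified Lean document; each statement's English description precedes it below -/
import Mathlib

section
/- Let d, n ≥ 1 and let x, y ∈ ℤ^{n+1} be two linearly independent primitive vectors. Then the gcd of the 2×2 minors of the matrix whose columns are ν(x) and ν(y) equals the gcd of the 2×2 minors of the matrix whose columns are x and y, where ν = ν_{d,n} is the degree-d Veronese embedding listing all monomials of degree d in the n+1 coordinates. -/
/-! A minor of `(ν x, ν y)` is a combination of minors of `(x, y)`: peeling one variable off
each monomial, `M(m + eᵢ, m' + eⱼ) = xᵢ yⱼ M(m, m') + x^{m'} y^m M(i, j)`, so `G ∣ V` by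
induction on the degree. Conversely, pairing the monomials `x_c^d` and `x_c^{d-1} x_b` gives
`V ∣ x_c^{d-1} y_c^{d-1} M(c, b)`, hence `V ∣ x_c^d y_c^{d-1} M(a, b)` by
`x_c M(a, b) = x_a M(c, b) - x_b M(c, a)`. A prime dividing `V` and all these cofactors divides
`x_c` or `y_c` for every `c`; taking `p ∤ xᵢ` and `p ∤ yⱼ` (primitivity), the pure-power minor
`xᵢ^d yⱼ^d - xⱼ^d yᵢ^d` then rules out `p ∣ V`. -/

noncomputable section

/-- The index type for monomials of degree `d` in `n+1` variables:
exponent vectors `m : Fin (n+1) → ℕ` with `∑ i, m i = d`. -/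
abbrev MonIdx (n d : ℕ) : Type :=
  {m : Fin (n + 1) → ℕ // m ∈ Finset.Nat.antidiagonalTuple (n + 1) d}

/-- The degree-`d` Veronese embedding: the list of all degree-`d` monomials
evaluated at the coordinates of `x`. -/
def ver (d n : ℕ) (x : Fin (n + 1) → ℤ) : MonIdx n d → ℤ :=
  fun m => ∏ i, x i ^ (m.1 i)

/-- The gcd of all 2×2 minors of the matrix with columns `c₁, c₂`. -/
def minorGcd {ι : Type*} [Fintype ι] (c₁ c₂ : ι → ℤ) : ℤ :=
  Finset.gcd Finset.univ (fun p : ι × ι => c₁ p.1 * c₂ p.2 - c₁ p.2 * c₂ p.1)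

section Minors

variable {ι : Type*} [Fintype ι]

def minor {R : Type*} [CommRing R] (c₁ c₂ : ι → R) (i j : ι) : R :=
  c₁ i * c₂ j - c₁ j * c₂ i

theorem dvd_minorGcd_iff {g : ℤ} {c₁ c₂ : ι → ℤ} :
    g ∣ minorGcd c₁ c₂ ↔ ∀ i j, g ∣ minor c₁ c₂ i j := by
  simp [minorGcd, minor, Finset.dvd_gcd_iff]

theorem minorGcd_dvd_minor (c₁ c₂ : ι → ℤ) (i j : ι) : minorGcd c₁ c₂ ∣ minor c₁ c₂ i j :=
  Finset.gcd_dvd (s := Finset.univ) (f := fun p : ι × ι => minor c₁ c₂ p.1 p.2)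
    (Finset.mem_univ (i, j))

theorem minorGcd_nonneg (c₁ c₂ : ι → ℤ) : 0 ≤ minorGcd c₁ c₂ := by
  rw [minorGcd, ← Finset.normalize_gcd, ← Int.abs_eq_normalize]
  exact abs_nonneg _

end Minors

section Monomials

variable {ι R : Type*} [Fintype ι] [CommMonoid R]

theorem prod_pow_add (x : ι → R) (m m' : ι → ℕ) :
    ∏ i, x i ^ (m + m') i = (∏ i, x i ^ m i) * ∏ i, x i ^ m' i := by
  simp [pow_add, Finset.prod_mul_distrib]

theorem prod_pow_single [DecidableEq ι] (x : ι → R) (c : ι) (k : ℕ) :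
    ∏ i, x i ^ Pi.single c k i = x c ^ k := by
  simp [Pi.single_apply, pow_ite]

theorem exists_eq_add_single_of_sum_eq_succ [DecidableEq ι] {m : ι → ℕ} {d : ℕ}
    (hm : ∑ i, m i = d + 1) : ∃ i, ∃ m₁ : ι → ℕ, m = m₁ + Pi.single i 1 ∧ ∑ i, m₁ i = d := by
  obtain ⟨i, -, hi⟩ := Finset.exists_ne_zero_of_sum_ne_zero (hm.trans_ne d.succ_ne_zero)
  have hsplit : m = (m - Pi.single i 1) + Pi.single i 1 := by
    funext k
    by_cases hk : k = i <;> simp [hk]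
    omega
  refine ⟨i, m - Pi.single i 1, hsplit, ?_⟩
  have hsum := congrArg (fun f : ι → ℕ => ∑ k, f k) hsplit
  simp only [Pi.add_apply, Finset.sum_add_distrib, Finset.sum_pi_single', Finset.mem_univ,
    if_true] at hsum
  omega

end Monomials

theorem dvd_minor_prod_pow_of_dvd_minor {ι R : Type*} [Fintype ι] [CommRing R] {g : R}
    {a b : ι → R} (h : ∀ i j, g ∣ minor a b i j) {d : ℕ} {m m' : ι → ℕ}
    (hm : ∑ i, m i = d) (hm' : ∑ i, m' i = d) :
    g ∣ minor (fun m : ι → ℕ => ∏ i, a i ^ m i) (fun m => ∏ i, b i ^ m i) m m' := by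
  classical
  induction d generalizing m m' with
  | zero =>
    have hm0 : m = 0 := funext <| by simpa using hm
    have hm'0 : m' = 0 := funext <| by simpa using hm'
    simp [minor, hm0, hm'0]
  | succ d ih =>
    obtain ⟨i, m₁, rfl, hm₁⟩ := exists_eq_add_single_of_sum_eq_succ hm
    obtain ⟨j, m₁', rfl, hm₁'⟩ := exists_eq_add_single_of_sum_eq_succ hm'
    have key : minor (fun m : ι → ℕ => ∏ i, a i ^ m i) (fun m => ∏ i, b i ^ m i)
          (m₁ + Pi.single i 1) (m₁' + Pi.single j 1) =
        a i * b j * minor (fun m : ι → ℕ => ∏ i, a i ^ m i) (fun m => ∏ i, b i ^ m i) m₁ m₁'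
          + (∏ k, a k ^ m₁' k) * (∏ k, b k ^ m₁ k) * minor a b i j := by
      simp only [minor, prod_pow_add, prod_pow_single, pow_one]
      ring
    rw [key]
    exact dvd_add ((ih hm₁ hm₁').mul_left _) ((h i j).mul_left _)

theorem Int.dvd_of_forall_dvd_mul {ι : Type*} [Fintype ι] {V M : ℤ} {t : ι → ℤ}
    (hdvd : ∀ c, V ∣ t c * M) (hprime : ∀ p : ℤ, Prime p → p ∣ V → ∃ c, ¬ p ∣ t c) :
    V ∣ M := by
  have hgcd : V ∣ Finset.univ.gcd t * M :=
    (Finset.dvd_gcd fun c _ => hdvd c).trans (Finset.gcd_mul_right' _ t M).dvd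
  refine (isCoprime_of_prime_dvd ?_ fun p hp hpV hpt => ?_).dvd_of_dvd_mul_left hgcd
  · rintro ⟨rfl, hzero⟩
    obtain ⟨c, hc⟩ := hprime 2 Int.prime_two (dvd_zero 2)
    exact hc (by simp [Finset.gcd_eq_zero_iff.mp hzero c (Finset.mem_univ c)])
  · obtain ⟨c, hc⟩ := hprime p hp hpV
    exact hc (hpt.trans (Finset.gcd_dvd (Finset.mem_univ c)))

theorem exists_not_dvd_and_not_dvd {ι R : Type*} [Fintype ι] [CommRing R] [IsDomain R]
    [NormalizedGCDMonoid R] {x y : ι → R} (hx : Finset.univ.gcd x = 1)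
    (hy : Finset.univ.gcd y = 1) {p : R} (hp : Prime p) {d : ℕ} (hd : d ≠ 0)
    (hpd : ∀ i j, p ∣ minor (x ^ d) (y ^ d) i j) : ∃ c, ¬ p ∣ x c ∧ ¬ p ∣ y c := by
  have hprim : ∀ z : ι → R, Finset.univ.gcd z = 1 → ∃ i, ¬ p ∣ z i := fun z hz => by
    by_contra! hall
    exact hp.not_dvd_one (hz ▸ Finset.dvd_gcd fun i _ => hall i)
  obtain ⟨i, hi⟩ := hprim x hx
  obtain ⟨j, hj⟩ := hprim y hy
  by_contra! hall
  have hxj : p ∣ x j ^ d * y i ^ d := (dvd_pow (not_not.mp (mt (hall j) hj)) hd).mul_right _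
  have hxy : p ∣ x i ^ d * y j ^ d := by
    simpa [minor] using dvd_add (hpd i j) hxj
  rcases hp.dvd_mul.mp hxy with h | h
  · exact hi (hp.dvd_of_dvd_pow h)
  · exact hj (hp.dvd_of_dvd_pow h)

section Veronese

variable {d n : ℕ}

def MonIdx.ofSum (m : Fin (n + 1) → ℕ) (hm : ∑ i, m i = d) : MonIdx n d :=
  ⟨m, Finset.Nat.mem_antidiagonalTuple.mpr hm⟩

theorem minorGcd_dvd_minorGcd_ver (x y : Fin (n + 1) → ℤ) :
    minorGcd x y ∣ minorGcd (ver d n x) (ver d n y) :=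
  dvd_minorGcd_iff.mpr fun m m' =>
    dvd_minor_prod_pow_of_dvd_minor (minorGcd_dvd_minor x y)
      (Finset.Nat.mem_antidiagonalTuple.mp m.2) (Finset.Nat.mem_antidiagonalTuple.mp m'.2)

theorem minorGcd_ver_dvd_minorGcd (hd : d ≠ 0) {x y : Fin (n + 1) → ℤ}
    (hx : Finset.univ.gcd x = 1) (hy : Finset.univ.gcd y = 1) :
    minorGcd (ver d n x) (ver d n y) ∣ minorGcd x y := by
  obtain ⟨e, rfl⟩ := Nat.exists_eq_succ_of_ne_zero hd
  set V := minorGcd (ver (e + 1) n x) (ver (e + 1) n y)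
  have hpure : ∀ i j, V ∣ minor (x ^ (e + 1)) (y ^ (e + 1)) i j := fun i j => by
    simpa [minor, ver, MonIdx.ofSum, prod_pow_single] using
      minorGcd_dvd_minor (ver (e + 1) n x) (ver (e + 1) n y)
        (MonIdx.ofSum (Pi.single i (e + 1)) (by simp))
        (MonIdx.ofSum (Pi.single j (e + 1)) (by simp))
  have hmixed : ∀ c b, V ∣ x c ^ e * y c ^ e * minor x y c b := fun c b => by
    have hsum : ∑ i, (Pi.single c e + Pi.single b 1 : Fin (n + 1) → ℕ) i = e + 1 := by
      simp [Finset.sum_add_distrib]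
    convert minorGcd_dvd_minor (ver (e + 1) n x) (ver (e + 1) n y)
      (MonIdx.ofSum (Pi.single c (e + 1)) (by simp)) (MonIdx.ofSum _ hsum) using 1
    simp only [minor, ver, MonIdx.ofSum, prod_pow_add, prod_pow_single]
    ring
  refine dvd_minorGcd_iff.mpr fun a b =>
    Int.dvd_of_forall_dvd_mul (t := fun c => x c ^ (e + 1) * y c ^ e) (fun c => ?_)
      (fun p hp hpV => ?_)
  · have hexpand : x c ^ (e + 1) * y c ^ e * minor x y a b =
        x a * (x c ^ e * y c ^ e * minor x y c b) - x b * (x c ^ e * y c ^ e * minor x y c a) := by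
      simp only [minor]
      ring
    rw [hexpand]
    exact dvd_sub ((hmixed c b).mul_left _) ((hmixed c a).mul_left _)
  · obtain ⟨c, hxc, hyc⟩ := exists_not_dvd_and_not_dvd hx hy hp e.succ_ne_zero
      fun i j => hpV.trans (hpure i j)
    refine ⟨c, fun hpc => ?_⟩
    rcases hp.dvd_mul.mp hpc with h | h
    exacts [hxc (hp.dvd_of_dvd_pow h), hyc (hp.dvd_of_dvd_pow h)]

end Veronese

theorem stmt2_general (d n : ℕ) (hd : 1 ≤ d) (x y : Fin (n + 1) → ℤ)
    (hx : Finset.gcd Finset.univ x = 1) (hy : Finset.gcd Finset.univ y = 1) :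
    minorGcd (ver d n x) (ver d n y) = minorGcd x y :=
  Int.dvd_antisymm (minorGcd_nonneg _ _) (minorGcd_nonneg _ _)
    (minorGcd_ver_dvd_minorGcd (Nat.one_le_iff_ne_zero.mp hd) hx hy)
    (minorGcd_dvd_minorGcd_ver x y)

/-- For `d, n ≥ 1` and linearly independent primitive vectors
`x, y ∈ ℤ^{n+1}`, the gcd of the 2×2 minors of the matrix with columns `ν(x), ν(y)`
equals the gcd of the 2×2 minors of the matrix with columns `x, y`, where `ν` is the
degree-`d` Veronese embedding. -/
theorem stmt2 (d n : ℕ) (hd : 1 ≤ d) (hn : 1 ≤ n) (x y : Fin (n + 1) → ℤ)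
    (hx : Finset.gcd Finset.univ x = 1) (hy : Finset.gcd Finset.univ y = 1)
    (h : LinearIndependent ℤ ![x, y]) :
    minorGcd (ver d n x) (ver d n y) = minorGcd x y :=
  stmt2_general d n hd x y hx hy
end
end

section
/- Let N ≥ 2, Q ≥ 1, and let c, d ∈ ℤ^N be two linearly independent primitive vectors. Then the lattice Λ = { y ∈ ℤ^N : ⟨c,y⟩ ≡ 0 mod Q and ⟨d,y⟩ ≡ 0 mod Q } has determinant Q² / gcd(G(c,d), Q), where G(c,d) is the gcd of the 2×2 minors of the matrix with columns c and d. -/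
/-!
Since `c` is primitive there is `a` with `⟨c, a⟩ = 1`. Replacing `d` by `e = d - ⟨d, a⟩ c` changes
neither the lattice nor the 2×2 minors, and gives `⟨e, a⟩ = 0`. Then every `e i` is a combination
`∑ j, a j * (c j * e i - c i * e j)` of minors, so `G(c, d)` is the gcd `g` of the entries of `e`.
The lattice is the kernel of `y ↦ (⟨c, y⟩, ⟨e, y⟩) mod Q`, whose image is `ℤ/Q × ⟨g mod Q⟩`: it is
hit by `a ↦ (1, 0)` and by a Bézout vector `t` for `e`, corrected to `t - ⟨c, t⟩ a ↦ (0, g)`.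
So the index is `Q · Q / gcd(g, Q)`.
-/

noncomputable section

/-- Euclidean inner product of two integer vectors. -/
def idot {ι : Type*} [Fintype ι] (x y : ι → ℤ) : ℤ := ∑ i, x i * y i

lemma idot_add {ι : Type*} [Fintype ι] (c a b : ι → ℤ) :
    idot c (a + b) = idot c a + idot c b := by
  simp [idot, mul_add, Finset.sum_add_distrib]

lemma idot_zero {ι : Type*} [Fintype ι] (c : ι → ℤ) : idot c 0 = 0 := by
  simp [idot]

lemma idot_neg {ι : Type*} [Fintype ι] (c a : ι → ℤ) : idot c (-a) = -idot c a := by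
  simp [idot, Finset.sum_neg_distrib]

/-- The lattice `{ y ∈ ℤ^N : ⟨c,y⟩ ≡ 0 mod Q and ⟨d,y⟩ ≡ 0 mod Q }`. -/
def latQQ {N : ℕ} (c d : Fin N → ℤ) (Q : ℕ) : AddSubgroup (Fin N → ℤ) where
  carrier := {y | (Q : ℤ) ∣ idot c y ∧ (Q : ℤ) ∣ idot d y}
  add_mem' := by
    intro a b ha hb
    exact ⟨by rw [idot_add]; exact dvd_add ha.1 hb.1,
           by rw [idot_add]; exact dvd_add ha.2 hb.2⟩
  zero_mem' := by
    exact ⟨by rw [idot_zero]; exact dvd_zero _, by rw [idot_zero]; exact dvd_zero _⟩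
  neg_mem' := by
    intro a ha
    exact ⟨by rw [idot_neg]; exact ha.1.neg_right, by rw [idot_neg]; exact ha.2.neg_right⟩

open Finset

namespace LatticeIndex

variable {ι : Type*} [Fintype ι]

lemma exists_dotProduct_eq_gcd (f : ι → ℤ) : ∃ t : ι → ℤ, f ⬝ᵥ t = univ.gcd f := by
  obtain ⟨t, ht⟩ := Finset.gcd_eq_sum_mul univ f
  exact ⟨t, ht.symm⟩

lemma gcd_dvd_dotProduct (f y : ι → ℤ) : univ.gcd f ∣ f ⬝ᵥ y :=
  Finset.dvd_sum fun i _ => (Finset.gcd_dvd (mem_univ i)).mul_right _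

lemma minorGcd_sub_smul (c d : ι → ℤ) (b : ℤ) : minorGcd c (d - b • c) = minorGcd c d := by
  unfold minorGcd
  congr 1
  ext p
  simp only [Pi.sub_apply, Pi.smul_apply, smul_eq_mul]
  ring

lemma minorGcd_eq_gcd {c e a : ι → ℤ} (hca : c ⬝ᵥ a = 1) (hea : e ⬝ᵥ a = 0) :
    minorGcd c e = univ.gcd e := by
  refine dvd_antisymm_of_normalize_eq Finset.normalize_gcd Finset.normalize_gcd
    (Finset.dvd_gcd fun i _ => ?_) (Finset.dvd_gcd fun p _ => ?_)
  · have hei : e i = ∑ j, a j * (c j * e i - c i * e j) := by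
      have hac : ∑ j, a j * c j = 1 := by rw [← hca, dotProduct_comm]; rfl
      have hae : ∑ j, a j * e j = 0 := by rw [← hea, dotProduct_comm]; rfl
      calc e i = (∑ j, a j * c j) * e i - c i * ∑ j, a j * e j := by rw [hac, hae]; ring
        _ = _ := by
          rw [Finset.sum_mul, Finset.mul_sum, ← Finset.sum_sub_distrib]
          exact Finset.sum_congr rfl fun j _ => by ring
    rw [hei]
    exact Finset.dvd_sum fun j _ => (Finset.gcd_dvd (mem_univ (j, i))).mul_left _
  · exact dvd_sub ((Finset.gcd_dvd (mem_univ p.2)).mul_left _)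
      ((Finset.gcd_dvd (mem_univ p.1)).mul_left _)

variable (Q : ℕ)

def dotModHom (c : ι → ℤ) : (ι → ℤ) →+ ZMod Q :=
  AddMonoidHom.mk' (fun y => ((c ⬝ᵥ y : ℤ) : ZMod Q)) fun y z => by
    rw [dotProduct_add, Int.cast_add]

@[simp]
lemma dotModHom_apply (c y : ι → ℤ) : dotModHom Q c y = ((c ⬝ᵥ y : ℤ) : ZMod Q) := rfl

lemma ker_prod_dotModHom_sub_smul (c d : ι → ℤ) (b : ℤ) :
    ((dotModHom Q c).prod (dotModHom Q (d - b • c))).ker =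
      ((dotModHom Q c).prod (dotModHom Q d)).ker := by
  ext y
  simp only [AddMonoidHom.mem_ker, AddMonoidHom.prod_apply, dotModHom_apply, Prod.mk_eq_zero,
    sub_dotProduct, smul_dotProduct, smul_eq_mul, Int.cast_sub, Int.cast_mul]
  constructor
  · rintro ⟨hc, he⟩; exact ⟨hc, by rwa [hc, mul_zero, sub_zero] at he⟩
  · rintro ⟨hc, hd⟩; exact ⟨hc, by rw [hc, hd, mul_zero, sub_zero]⟩

lemma range_prod_dotModHom {c e a : ι → ℤ} (hca : c ⬝ᵥ a = 1) (hea : e ⬝ᵥ a = 0) :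
    ((dotModHom Q c).prod (dotModHom Q e)).range =
      (⊤ : AddSubgroup (ZMod Q)).prod (AddSubgroup.zmultiples ((univ.gcd e : ℤ) : ZMod Q)) := by
  apply le_antisymm
  · rintro _ ⟨y, rfl⟩
    obtain ⟨k, hk⟩ := gcd_dvd_dotProduct e y
    refine ⟨trivial, k, ?_⟩
    simp [hk, mul_comm]
  · rintro ⟨u, v⟩ ⟨-, k, rfl⟩
    obtain ⟨u, rfl⟩ := ZMod.intCast_surjective u
    obtain ⟨t, het⟩ := exists_dotProduct_eq_gcd e
    set w := t - (c ⬝ᵥ t) • a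
    have hcw : c ⬝ᵥ w = 0 := by
      simp only [w, dotProduct_sub, dotProduct_smul, smul_eq_mul, hca, mul_one, sub_self]
    have hew : e ⬝ᵥ w = univ.gcd e := by
      simp only [w, dotProduct_sub, dotProduct_smul, smul_eq_mul, hea, het, mul_zero, sub_zero]
    refine ⟨u • a + k • w, ?_⟩
    simp only [AddMonoidHom.prod_apply, dotModHom_apply, dotProduct_add, dotProduct_smul,
      smul_eq_mul, hca, hea, hcw, hew]
    simp

lemma card_top_prod_zmultiples [NeZero Q] (g : ℤ) :
    Nat.card ((⊤ : AddSubgroup (ZMod Q)).prod (AddSubgroup.zmultiples (g : ZMod Q))) =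
      Q * (Q / Nat.gcd g.natAbs Q) := by
  have hord : addOrderOf (g : ZMod Q) = addOrderOf (g.natAbs : ZMod Q) := by
    rcases Int.natAbs_eq g with hg | hg <;> rw [hg] <;> simp
  rw [Nat.card_congr (AddSubgroup.prodEquiv _ _).toEquiv, Nat.card_prod, AddSubgroup.card_top,
    Nat.card_zmod, Nat.card_zmultiples, hord, ZMod.addOrderOf_coe _ (NeZero.ne Q), Nat.gcd_comm]

theorem index_ker_prod_dotModHom [NeZero Q] {c : ι → ℤ} (hc : univ.gcd c = 1) (d : ι → ℤ) :
    ((dotModHom Q c).prod (dotModHom Q d)).ker.index =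
      Q ^ 2 / Nat.gcd (minorGcd c d).natAbs Q := by
  obtain ⟨a, hca⟩ := exists_dotProduct_eq_gcd c
  rw [hc] at hca
  set e := d - (d ⬝ᵥ a) • c
  have hea : e ⬝ᵥ a = 0 := by
    simp only [e, sub_dotProduct, smul_dotProduct, smul_eq_mul, hca, mul_one, sub_self]
  have hG : minorGcd c d = univ.gcd e := by
    rw [← minorGcd_sub_smul c d (d ⬝ᵥ a), minorGcd_eq_gcd hca hea]
  rw [← ker_prod_dotModHom_sub_smul Q c d (d ⬝ᵥ a), AddSubgroup.index_ker,
    range_prod_dotModHom Q hca hea, card_top_prod_zmultiples, hG,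
    ← Nat.mul_div_assoc _ (Nat.gcd_dvd_right _ _), sq]

lemma latQQ_eq_ker_prod_dotModHom {N : ℕ} (c d : Fin N → ℤ) :
    latQQ c d Q = ((dotModHom Q c).prod (dotModHom Q d)).ker := by
  ext y
  simp only [AddMonoidHom.mem_ker, AddMonoidHom.prod_apply, dotModHom_apply, Prod.mk_eq_zero,
    ZMod.intCast_zmod_eq_zero_iff_dvd]
  rfl

end LatticeIndex

open LatticeIndex in
theorem stmt3_general (N : ℕ) (Q : ℕ) (hQ : 1 ≤ Q) (c d : Fin N → ℤ)
    (hc : Finset.gcd Finset.univ c = 1) :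
    ((latQQ c d Q).index : ℤ) = (Q : ℤ) ^ 2 / (Int.gcd (minorGcd c d) (Q : ℤ) : ℤ) := by
  have : NeZero Q := ⟨by omega⟩
  rw [latQQ_eq_ker_prod_dotModHom, index_ker_prod_dotModHom Q hc, Int.gcd, Int.natAbs_natCast,
    Int.natCast_div, Nat.cast_pow]

/-- Let `N ≥ 2`, `Q ≥ 1`, and `c, d ∈ ℤ^N` linearly independent and
primitive. The full-rank lattice `{ y : ⟨c,y⟩ ≡ ⟨d,y⟩ ≡ 0 mod Q }` has determinant
(= index in `ℤ^N`) equal to `Q² / gcd(G(c,d), Q)`. -/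
theorem stmt3 (N : ℕ) (hN : 2 ≤ N) (Q : ℕ) (hQ : 1 ≤ Q) (c d : Fin N → ℤ)
    (hc : Finset.gcd Finset.univ c = 1) (hd : Finset.gcd Finset.univ d = 1)
    (h : LinearIndependent ℤ ![c, d]) :
    ((latQQ c d Q).index : ℤ) = (Q : ℤ) ^ 2 / (Int.gcd (minorGcd c d) (Q : ℤ) : ℤ) :=
  stmt3_general N Q hQ c d hc
end
end

section
/- Let N ≥ 2, Q ≥ 1, and let c, d ∈ ℤ^N be two linearly independent primitive vectors. Then the rank N−1 lattice Λ = { y ∈ ℤ^N : ⟨c,y⟩ = 0 and ⟨d,y⟩ ≡ 0 mod Q } has determinant ‖c‖ · Q / gcd(G(c,d), Q). -/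
noncomputable section

lemma idot_smul {ι : Type*} [Fintype ι] (c : ι → ℤ) (m : ℤ) (a : ι → ℤ) :
    idot c (m • a) = m * idot c a := by
  simp [idot, Finset.mul_sum, smul_eq_mul]; ring_nf
  exact Finset.sum_congr rfl fun i _ => by ring

/-- Euclidean norm of an integer vector. -/
def inorm {ι : Type*} [Fintype ι] (x : ι → ℤ) : ℝ := Real.sqrt (∑ i, (x i : ℝ) ^ 2)

/-- The determinant of the lattice spanned by the family `v` (assumed to be a basis),
namely `sqrt (det (Bᵀ B))` where `B` has the `v k` as columns: the square root of the
Gram determinant. -/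
def latDet {ι κ : Type*} [Fintype ι] [Fintype κ] [DecidableEq κ] (v : κ → ι → ℤ) : ℝ :=
  Real.sqrt ((Matrix.det (Matrix.of fun i j => idot (v i) (v j)) : ℤ) : ℝ)

/-- The lattice `{ y ∈ ℤ^N : ⟨c,y⟩ = 0 and ⟨d,y⟩ ≡ 0 mod Q }` as a `ℤ`-submodule. -/
def latMix {N : ℕ} (c d : Fin N → ℤ) (Q : ℕ) : Submodule ℤ (Fin N → ℤ) where
  carrier := {y | idot c y = 0 ∧ (Q : ℤ) ∣ idot d y}
  add_mem' := by
    intro a b ha hb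
    exact ⟨by rw [idot_add, ha.1, hb.1, add_zero],
           by rw [idot_add]; exact dvd_add ha.2 hb.2⟩
  zero_mem' := by
    constructor <;> simp [idot]
  smul_mem' := by
    intro m a ha
    exact ⟨by rw [idot_smul, ha.1, mul_zero], by rw [idot_smul]; exact ha.2.mul_left m⟩

/-!
Write `c^⊥` for `{y : ⟨c,y⟩ = 0}`, `G = G(c,d)` and `g = gcd(G, Q)`. As `c` is primitive there
is `u` with `⟨c,u⟩ = 1`, and then `y ↦ ⟨d,y⟩` maps `c^⊥` onto `Gℤ`, with `G ≠ 0` by linear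
independence. So if `k` is a basis of `c^⊥ ∩ d^⊥` and `w ∈ c^⊥` has `⟨d,w⟩ = G`, then `(k, w)`
is a basis of `c^⊥`, `(k, w, u)` one of `ℤ^N`, and `(k, (Q/g) w)` one of `Λ`, because
`Gℤ ∩ Qℤ = lcm(G,Q)ℤ = (Q/g)Gℤ`. The basis `(k, w, u)` has Gram determinant `1`; replacing `u`
by `c ≡ ‖c‖² u (mod c^⊥)` multiplies it by `‖c‖⁴` and makes the Gram matrix block diagonal,
so `det (c^⊥) = ‖c‖`. Scaling `w` by `Q/g` gives `det Λ = (Q/g) ‖c‖`.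
-/

open Matrix hiding gram
open Submodule

section Gram

variable {ι κ κ' : Type*} [Fintype ι] [Fintype κ]

def gram (v : κ → ι → ℤ) : Matrix κ κ ℤ := Matrix.of fun i j => v i ⬝ᵥ v j

theorem latDet_eq_sqrt_det_gram [DecidableEq κ] (v : κ → ι → ℤ) :
    latDet v = √((gram v).det : ℝ) :=
  rfl

theorem gram_sum_smul [Fintype κ'] (C : Matrix κ' κ ℤ) (v : κ → ι → ℤ) :
    gram (fun j => ∑ i, C j i • v i) = C * gram v * Cᵀ := by
  ext a b
  simp only [gram, of_apply, mul_apply, transpose_apply, sum_dotProduct, dotProduct_sum,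
    smul_dotProduct, dotProduct_smul, smul_eq_mul, Finset.sum_mul, Finset.mul_sum]
  exact Finset.sum_congr rfl fun _ _ => Finset.sum_congr rfl fun _ _ => by ring

theorem det_gram_sum_smul [DecidableEq κ] (C : Matrix κ κ ℤ) (v : κ → ι → ℤ) :
    (gram fun j => ∑ i, C j i • v i).det = C.det ^ 2 * (gram v).det := by
  rw [gram_sum_smul, det_mul, det_mul, det_transpose]
  ring

theorem det_gram_smul [DecidableEq κ] (s : κ → ℤ) (v : κ → ι → ℤ) :
    (gram fun i => s i • v i).det = (∏ i, s i) ^ 2 * (gram v).det := by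
  have h : (fun i => s i • v i) = fun j => ∑ i, diagonal s j i • v i := by
    ext1 j
    simp [diagonal_apply, ite_smul]
  rw [h, det_gram_sum_smul, det_diagonal]

theorem det_gram_comp_equiv [DecidableEq κ] [Fintype κ'] [DecidableEq κ']
    (v : κ → ι → ℤ) (e : κ' ≃ κ) : (gram (v ∘ e)).det = (gram v).det :=
  det_submatrix_equiv_self e (gram v)

theorem det_gram_sum_elim_of_orthogonal [DecidableEq κ] (v : κ → ι → ℤ) (x : ι → ℤ)
    (h : ∀ i, v i ⬝ᵥ x = 0) :
    (gram (Sum.elim v fun _ : Unit => x)).det = (gram v).det * (x ⬝ᵥ x) := by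
  have hblock : gram (Sum.elim v fun _ : Unit => x) =
      fromBlocks (gram v) 0 0 (of fun _ _ => x ⬝ᵥ x) := by
    ext (i | i) (j | j) <;> simp [gram, h, dotProduct_comm x]
  rw [hblock, det_fromBlocks_zero₂₁, det_unique (of _)]
  rfl

theorem det_gram_eq_of_span_eq [DecidableEq κ] [Fintype κ'] [DecidableEq κ']
    {v : κ → ι → ℤ} {v' : κ' → ι → ℤ} (hv : LinearIndependent ℤ v)
    (hv' : LinearIndependent ℤ v') (h : span ℤ (Set.range v) = span ℤ (Set.range v')) :
    (gram v).det = (gram v').det := by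
  let B := Module.Basis.span hv
  let B' := (Module.Basis.span hv').map (LinearEquiv.ofEq _ _ h.symm)
  let e := B'.indexEquiv B
  have hB' : ∀ j, (B'.reindex e j : ι → ℤ) = (v' ∘ e.symm) j := by
    intro j
    simp [B']
  have hrepr : ∀ j, (v' ∘ e.symm) j = ∑ i, (B.toMatrix (B'.reindex e))ᵀ j i • v i := by
    intro j
    rw [← hB']
    conv_lhs => rw [← B.sum_repr (B'.reindex e j)]
    simp [B, Module.Basis.toMatrix_apply]
  have hunit : IsUnit (B.toMatrix (B'.reindex e))ᵀ.det := by
    rw [det_transpose]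
    exact isUnit_det_of_right_inverse (B.toMatrix_mul_toMatrix_flip _)
  rw [← det_gram_comp_equiv v' e.symm, funext hrepr, det_gram_sum_smul, Int.isUnit_sq hunit,
    one_mul]

theorem det_gram_eq_one_of_span_eq_top [DecidableEq κ] {v : κ → ι → ℤ}
    (hv : LinearIndependent ℤ v) (h : span ℤ (Set.range v) = ⊤) : (gram v).det = 1 := by
  classical
  let E := Pi.basisFun ℤ ι
  have hE : gram E = 1 := by
    ext i j
    simp [E, gram, one_apply, Pi.single_apply, eq_comm]
  rw [det_gram_eq_of_span_eq hv E.linearIndependent (h.trans E.span_eq.symm), hE, det_one]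

end Gram

section Complement

variable {R M κ : Type*} [CommRing R] [AddCommGroup M] [Module R M]
  (φ : M →ₗ[R] R) {k : κ → M} {w : M}

theorem linearIndependent_sum_elim_of_span_le_ker [IsDomain R] (hk : LinearIndependent R k)
    (hkφ : span R (Set.range k) ≤ LinearMap.ker φ) (hw : φ w ≠ 0) :
    LinearIndependent R (Sum.elim k fun _ : Unit => w) := by
  refine hk.sum_type (.of_comp φ (linearIndependent_unique_iff.mpr hw))
    ((disjoint_def.mpr fun x hxk hxw => ?_).mono_left hkφ)
  obtain ⟨t, rfl⟩ := mem_span_singleton.mp (by simpa using hxw)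
  rw [LinearMap.mem_ker, map_smul, smul_eq_mul, mul_eq_zero] at hxk
  rw [hxk.resolve_right hw, zero_smul]

theorem span_sum_elim_eq_of_dvd {P : Submodule R M}
    (hk : span R (Set.range k) = P ⊓ LinearMap.ker φ) (hwP : w ∈ P)
    (hdvd : ∀ y ∈ P, φ w ∣ φ y) :
    span R (Set.range (Sum.elim k fun _ : Unit => w)) = P := by
  rw [Set.Sum.elim_range, span_union, Set.range_const, hk]
  refine le_antisymm (sup_le inf_le_left ((span_singleton_le_iff_mem _ _).mpr hwP))
    fun y hy => ?_
  obtain ⟨t, ht⟩ := hdvd y hy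
  have hyt : y - t • w ∈ P ⊓ LinearMap.ker φ :=
    ⟨sub_mem hy (P.smul_mem t hwP), by
      rw [SetLike.mem_coe, LinearMap.mem_ker, map_sub, map_smul, ht, smul_eq_mul, mul_comm,
        sub_self]⟩
  rw [← sub_add_cancel y (t • w)]
  exact add_mem (mem_sup_left hyt) (mem_sup_right (mem_span_singleton.mpr ⟨t, rfl⟩))

end Complement

theorem span_range_coe_basis {R M κ : Type*} [Semiring R] [AddCommMonoid M] [Module R M]
    {P : Submodule R M} (b : Module.Basis κ R P) :
    span R (Set.range fun i => (b i : M)) = P := by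
  rw [show (Set.range fun i => (b i : M)) = P.subtype '' Set.range b from Set.range_comp _ _,
    span_image, b.span_eq, Submodule.map_top, range_subtype]

theorem linearIndependent_coe_basis {R M κ : Type*} [Ring R] [AddCommGroup M] [Module R M]
    {P : Submodule R M} (b : Module.Basis κ R P) :
    LinearIndependent R fun i => (b i : M) :=
  b.linearIndependent.map' _ P.ker_subtype

section Minors

variable {ι : Type*} [Fintype ι] {c d u y : ι → ℤ}

theorem exists_dotProduct_eq_one_of_gcd_eq_one (hc : Finset.univ.gcd c = 1) :
    ∃ u, c ⬝ᵥ u = 1 := by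
  obtain ⟨u, hu⟩ := Finset.gcd_eq_sum_mul Finset.univ c
  exact ⟨u, hu.symm.trans hc⟩

/-- With Bézout coefficients `g` for the minors, `w = ∑ g(i,j) (c i • e j - c j • e i)`. -/
theorem exists_dotProduct_eq_zero_and_eq_minorGcd (c d : ι → ℤ) :
    ∃ w, c ⬝ᵥ w = 0 ∧ d ⬝ᵥ w = minorGcd c d := by
  obtain ⟨g, hg⟩ := Finset.gcd_eq_sum_mul Finset.univ
    fun p : ι × ι => c p.1 * d p.2 - c p.2 * d p.1
  refine ⟨fun j => ∑ i, (g (i, j) - g (j, i)) * c i, ?_, ?_⟩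
  · simp only [dotProduct, Finset.mul_sum, sub_mul, mul_sub, Finset.sum_sub_distrib]
    rw [Finset.sum_comm, sub_eq_zero]
    exact Finset.sum_congr rfl fun _ _ => Finset.sum_congr rfl fun _ _ => by ring
  · rw [minorGcd, hg, Fintype.sum_prod_type]
    simp only [dotProduct, Finset.mul_sum, sub_mul, mul_sub, Finset.sum_sub_distrib]
    rw [Finset.sum_comm (f := fun x i => d x * (g (i, x) * c i))]
    congr 1 <;>
      exact Finset.sum_congr rfl fun _ _ => Finset.sum_congr rfl fun _ _ => by ring

theorem minorGcd_dvd_dotProduct (hu : c ⬝ᵥ u = 1) (hy : c ⬝ᵥ y = 0) :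
    minorGcd c d ∣ d ⬝ᵥ y := by
  have key : d ⬝ᵥ y = ∑ i, ∑ j, y i * u j * (c j * d i - c i * d j) :=
    calc d ⬝ᵥ y = (d ⬝ᵥ y) * (c ⬝ᵥ u) - (c ⬝ᵥ y) * (d ⬝ᵥ u) := by rw [hu, hy]; ring
      _ = _ := by
        simp only [dotProduct, Finset.sum_mul_sum, ← Finset.sum_sub_distrib]
        exact Finset.sum_congr rfl fun _ _ => Finset.sum_congr rfl fun _ _ => by ring
  rw [key]
  exact Finset.dvd_sum fun i _ => Finset.dvd_sum fun j _ =>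
    (Finset.gcd_dvd (Finset.mem_univ (j, i))).mul_left _

theorem minorGcd_ne_zero (h : LinearIndependent ℤ ![c, d]) : minorGcd c d ≠ 0 := by
  intro h0
  obtain ⟨i, hi⟩ : ∃ i, c i ≠ 0 := Function.ne_iff.mp (h.ne_zero 0)
  have hrel : d i • c + (-c i) • d = 0 := by
    ext j
    have := Finset.gcd_eq_zero_iff.mp h0 (i, j) (Finset.mem_univ _)
    simp only [Pi.add_apply, Pi.smul_apply, smul_eq_mul, Pi.zero_apply]
    linarith
  exact hi (neg_eq_zero.mp (LinearIndependent.pair_iff.mp h _ _ hrel).2)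

end Minors

theorem det_gram_eq_dotProduct_self_of_span_eq_ker {ι κ : Type*} [Fintype ι] [Fintype κ]
    [DecidableEq κ] {c u : ι → ℤ} (hu : c ⬝ᵥ u = 1) {k : κ → ι → ℤ}
    (hk : LinearIndependent ℤ k)
    (hspan : span ℤ (Set.range k) = LinearMap.ker (dotProductBilin ℤ ℤ c)) :
    (gram k).det = c ⬝ᵥ c := by
  set S := c ⬝ᵥ c
  have hkc : ∀ i, k i ⬝ᵥ c = 0 := fun i => by
    simpa [dotProduct_comm c] using hspan.le (subset_span ⟨i, rfl⟩)
  have hku : (gram (Sum.elim k fun _ : Unit => u)).det = 1 :=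
    det_gram_eq_one_of_span_eq_top
      (linearIndependent_sum_elim_of_span_le_ker _ hk hspan.le (by simp [hu]))
      (span_sum_elim_eq_of_dvd _ (by rw [top_inf_eq, hspan]) mem_top (by simp [hu]))
  obtain ⟨a, ha⟩ := (mem_span_range_iff_exists_fun ℤ).mp
    (hspan ▸ (show c - S • u ∈ LinearMap.ker (dotProductBilin ℤ ℤ c) by
      rw [LinearMap.mem_ker, map_sub, map_smul, dotProductBilin_apply_apply,
        dotProductBilin_apply_apply, hu, smul_eq_mul, mul_one, sub_self]))
  let C : Matrix (κ ⊕ Unit) (κ ⊕ Unit) ℤ := fromBlocks 1 0 (of fun _ => a) (of fun _ _ => S)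
  have hC : (Sum.elim k fun _ : Unit => c) =
      fun j => ∑ i, C j i • Sum.elim k (fun _ : Unit => u) i := by
    ext1 (j | j)
    · simp [C, Fintype.sum_sum_type, one_apply]
    · simp only [C, Fintype.sum_sum_type, fromBlocks_apply₂₁, fromBlocks_apply₂₂, of_apply,
        Sum.elim_inl, Sum.elim_inr, Finset.univ_unique, Finset.sum_singleton, ha, sub_add_cancel]
  have hS : S ≠ 0 := by
    refine dotProduct_self_eq_zero.not.mpr fun hc => ?_
    simp [hc] at hu
  have hdet : (gram k).det * S = S * S := by
    rw [← det_gram_sum_elim_of_orthogonal k c hkc, hC, det_gram_sum_smul, hku,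
      det_fromBlocks_zero₁₂, det_one, det_unique (of _)]
    simp [sq]
  exact mul_right_cancel₀ hS hdet

theorem natAbs_natCast_div_gcd_mul (G : ℤ) (Q : ℕ) :
    (((Q / Int.gcd G Q : ℕ) : ℤ) * G).natAbs = Int.lcm G Q := by
  rw [Int.natAbs_mul, Int.natAbs_natCast, Int.lcm, Int.gcd, Int.natAbs_natCast, Nat.lcm,
    mul_comm, Nat.mul_div_assoc _ (Nat.gcd_dvd_right _ _)]

theorem natCast_div_gcd_mul_ne_zero {G : ℤ} {Q : ℕ} (hG : G ≠ 0) (hQ : Q ≠ 0) :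
    ((Q / Int.gcd G Q : ℕ) : ℤ) * G ≠ 0 := by
  rw [← Int.natAbs_ne_zero, natAbs_natCast_div_gcd_mul]
  exact Int.lcm_ne_zero hG (Int.natCast_ne_zero.mpr hQ)

theorem natCast_dvd_natCast_div_gcd_mul (G : ℤ) (Q : ℕ) :
    (Q : ℤ) ∣ ((Q / Int.gcd G Q : ℕ) : ℤ) * G := by
  rw [← Int.dvd_natAbs, natAbs_natCast_div_gcd_mul]
  exact Int.dvd_lcm_right _ _

theorem natCast_div_gcd_mul_dvd {G y : ℤ} {Q : ℕ} (hG : G ∣ y) (hQ : (Q : ℤ) ∣ y) :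
    ((Q / Int.gcd G Q : ℕ) : ℤ) * G ∣ y := by
  rw [← Int.natAbs_dvd, natAbs_natCast_div_gcd_mul]
  exact Int.coe_lcm_dvd hG hQ

section latMix

variable {N : ℕ} {c d : Fin N → ℤ} {Q : ℕ}

theorem mem_latMix {y : Fin N → ℤ} : y ∈ latMix c d Q ↔ c ⬝ᵥ y = 0 ∧ (Q : ℤ) ∣ d ⬝ᵥ y :=
  Iff.rfl

theorem latMix_inf_ker :
    latMix c d Q ⊓ LinearMap.ker (dotProductBilin ℤ ℤ d) =
      LinearMap.ker (dotProductBilin ℤ ℤ c) ⊓ LinearMap.ker (dotProductBilin ℤ ℤ d) := by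
  ext y
  simp only [mem_inf, mem_latMix, LinearMap.mem_ker, dotProductBilin_apply_apply]
  exact ⟨fun h => ⟨h.1.1, h.2⟩, fun h => ⟨⟨h.1, h.2 ▸ dvd_zero _⟩, h.2⟩⟩

theorem det_gram_latMix {κ : Type*} [Fintype κ] [DecidableEq κ] {u : Fin N → ℤ}
    (hu : c ⬝ᵥ u = 1) (hG : minorGcd c d ≠ 0) (hQ : Q ≠ 0) {b : κ → Fin N → ℤ}
    (hb : LinearIndependent ℤ b) (hspan : span ℤ (Set.range b) = latMix c d Q) :
    (gram b).det = ((Q / Int.gcd (minorGcd c d) Q : ℕ) : ℤ) ^ 2 * (c ⬝ᵥ c) := by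
  set G := minorGcd c d
  set Q' : ℤ := ((Q / Int.gcd G Q : ℕ) : ℤ)
  let φ := dotProductBilin ℤ ℤ d
  let K := LinearMap.ker (dotProductBilin ℤ ℤ c) ⊓ LinearMap.ker φ
  let k := fun i => (Module.finBasis ℤ K i : Fin N → ℤ)
  have hk : LinearIndependent ℤ k := linearIndependent_coe_basis _
  have hkspan : span ℤ (Set.range k) = K := span_range_coe_basis _
  have hkφ : span ℤ (Set.range k) ≤ LinearMap.ker φ := hkspan.le.trans inf_le_right
  obtain ⟨w, hwc, hwd⟩ := exists_dotProduct_eq_zero_and_eq_minorGcd c d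
  have hφw : φ w = G := hwd
  have hkw : (gram (Sum.elim k fun _ : Unit => w)).det = c ⬝ᵥ c :=
    det_gram_eq_dotProduct_self_of_span_eq_ker hu
      (linearIndependent_sum_elim_of_span_le_ker φ hk hkφ (hφw ▸ hG))
      (span_sum_elim_eq_of_dvd φ hkspan hwc fun y hy => hφw ▸ minorGcd_dvd_dotProduct hu hy)
  have hφQ'w : φ (Q' • w) = Q' * G := by rw [map_smul, hφw, smul_eq_mul]
  have hΛ : span ℤ (Set.range (Sum.elim k fun _ : Unit => Q' • w)) = latMix c d Q := by
    refine span_sum_elim_eq_of_dvd φ (hkspan.trans latMix_inf_ker.symm)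
      (mem_latMix.mpr ⟨?_, ?_⟩) fun y hy => ?_
    · rw [dotProduct_smul, hwc, smul_zero]
    · exact (hφQ'w ▸ natCast_dvd_natCast_div_gcd_mul G Q : (Q : ℤ) ∣ φ (Q' • w))
    · exact hφQ'w ▸ natCast_div_gcd_mul_dvd (minorGcd_dvd_dotProduct hu hy.1) hy.2
  have hscale : (Sum.elim k fun _ : Unit => Q' • w) =
      fun i => Sum.elim (fun _ => 1) (fun _ : Unit => Q') i • Sum.elim k (fun _ : Unit => w) i := by
    ext1 (i | i) <;> simp
  rw [det_gram_eq_of_span_eq hb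
      (linearIndependent_sum_elim_of_span_le_ker φ hk hkφ
        (hφQ'w ▸ natCast_div_gcd_mul_ne_zero hG hQ)) (hspan.trans hΛ.symm),
    hscale, det_gram_smul, hkw]
  simp [Fintype.prod_sum_type]

end latMix

theorem sqrt_dotProduct_self_eq_inorm {ι : Type*} [Fintype ι] (c : ι → ℤ) :
    √((c ⬝ᵥ c : ℤ) : ℝ) = inorm c := by
  simp [inorm, dotProduct, sq]

theorem stmt4_general (N : ℕ) (Q : ℕ) (hQ : 1 ≤ Q) (c d : Fin N → ℤ)
    (hc : Finset.gcd Finset.univ c = 1)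
    (h : LinearIndependent ℤ ![c, d])
    (b : Module.Basis (Fin (N - 1)) ℤ ↥(latMix c d Q)) :
    latDet (fun i => ((b i : Fin N → ℤ))) =
      inorm c * (Q : ℝ) / (Int.gcd (minorGcd c d) (Q : ℤ) : ℝ) := by
  obtain ⟨u, hu⟩ := exists_dotProduct_eq_one_of_gcd_eq_one hc
  have hdet := det_gram_latMix hu (minorGcd_ne_zero h) (by omega) (linearIndependent_coe_basis b)
    (span_range_coe_basis b)
  have hg : Int.gcd (minorGcd c d) Q ∣ Q := Int.gcd_dvd_natAbs_right _ _
  have hg0 : (Int.gcd (minorGcd c d) Q : ℝ) ≠ 0 := by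
    exact_mod_cast Int.gcd_ne_zero_left (minorGcd_ne_zero h)
  rw [latDet_eq_sqrt_det_gram, hdet, Int.cast_mul, Int.cast_pow, Real.sqrt_mul (by positivity),
    Real.sqrt_sq (by positivity), sqrt_dotProduct_self_eq_inorm, Int.cast_natCast,
    Nat.cast_div hg hg0]
  ring

/-- Let `N ≥ 2`, `Q ≥ 1`, and `c, d ∈ ℤ^N` linearly independent and
primitive. The rank `N−1` lattice `{ y : ⟨c,y⟩ = 0, ⟨d,y⟩ ≡ 0 mod Q }` has determinant
`‖c‖ · Q / gcd(G(c,d), Q)`: for any `ℤ`-basis of it, the square root of the Gram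
determinant of the basis equals this quantity. -/
theorem stmt4 (N : ℕ) (hN : 2 ≤ N) (Q : ℕ) (hQ : 1 ≤ Q) (c d : Fin N → ℤ)
    (hc : Finset.gcd Finset.univ c = 1) (hd : Finset.gcd Finset.univ d = 1)
    (h : LinearIndependent ℤ ![c, d])
    (b : Module.Basis (Fin (N - 1)) ℤ ↥(latMix c d Q)) :
    latDet (fun i => ((b i : Fin N → ℤ))) =
      inorm c * (Q : ℝ) / (Int.gcd (minorGcd c d) (Q : ℤ) : ℝ) :=
  stmt4_general N Q hQ c d hc h b
end
end

section
/- Let n ≥ 1 and let x, y ∈ ℤ^{n+1} be two linearly independent vectors. Then the minimal determinant 𝔡₂(x,y) of a rank-2 sublattice of ℤ^{n+1} containing both x and y equals (‖x‖²‖y‖² − ⟨x,y⟩²)^{1/2} / G(x,y), where G(x,y) is the gcd of the 2×2 minors of the matrix with columns x and y. -/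
noncomputable section

/-- The minimal determinant `𝔡_r(S)` of a rank-`r` sublattice of `ℤ^{n+1}` containing the
set `S`: the infimum of `sqrt (Gram det)` over bases `v` of rank-`r` sublattices whose
span contains `S`. -/
def dmin (n r : ℕ) (S : Set (Fin (n + 1) → ℤ)) : ℝ :=
  sInf {t : ℝ | ∃ v : Fin r → (Fin (n + 1) → ℤ), LinearIndependent ℤ v ∧
    S ⊆ (Submodule.span ℤ (Set.range v) : Set (Fin (n + 1) → ℤ)) ∧ t = latDet v}

/-! If `x, y` lie in the lattice with basis `v₀, v₁`, the integer matrix expressing them in that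
basis, of determinant `D`, multiplies the Gram determinant by `D²` and the gcd of the `2 × 2`
minors by `|D|`. Hence `det L = √Gram(x, y) · G(v₀, v₁) / G(x, y) ≥ √Gram(x, y) / G(x, y)`.
Equality holds for the saturation of `span {x, y}`: by the Smith normal form its basis extends to
a basis of `ℤ^{n+1}`, so `G(v₀, v₁) = 1`. -/

namespace LatticeMinDet

lemma exists_basis_embedding_span_le {R M ι κ : Type*} [CommRing R] [IsDomain R]
    [IsPrincipalIdealRing R] [AddCommGroup M] [Module R M] [Finite ι]
    (b₀ : Module.Basis ι R M) {w : κ → M} (hw : LinearIndependent R w) :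
    ∃ (b : Module.Basis ι R M) (f : κ ↪ ι),
      Submodule.span R (Set.range w) ≤ Submodule.span R (Set.range (b ∘ f)) := by
  obtain ⟨m, b, bN, f, a, hsnf⟩ := (Submodule.span R (Set.range w)).smithNormalForm b₀
  let e : κ ≃ Fin m := (Module.Basis.span hw).indexEquiv bN
  refine ⟨b, e.toEmbedding.trans f, ?_⟩
  have hspan := congrArg (Submodule.map (Submodule.span R (Set.range w)).subtype) bN.span_eq
  rw [Submodule.map_span, Submodule.map_top, Submodule.range_subtype] at hspan
  rw [← hspan, Submodule.span_le]
  rintro _ ⟨_, ⟨i, rfl⟩, rfl⟩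
  rw [Submodule.subtype_apply, hsnf i]
  exact Submodule.smul_mem _ _ (Submodule.subset_span ⟨e.symm i, by simp⟩)

section

variable {ι : Type*} [Fintype ι]

lemma idot_comm (u w : ι → ℤ) : idot u w = idot w u := by
  simp only [idot, mul_comm]

lemma idot_add_smul_left (a b : ℤ) (u w z : ι → ℤ) :
    idot (a • u + b • w) z = a * idot u z + b * idot w z := by
  simp only [idot, Pi.add_apply, Pi.smul_apply, smul_eq_mul, add_mul, Finset.sum_add_distrib,
    Finset.mul_sum, mul_assoc]

lemma idot_add_smul_right (a b : ℤ) (u w z : ι → ℤ) :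
    idot z (a • u + b • w) = a * idot z u + b * idot z w := by
  rw [idot_comm, idot_add_smul_left, idot_comm u, idot_comm w]

def gram2 (u w : ι → ℤ) : ℤ := idot u u * idot w w - idot u w ^ 2

lemma gram2_add_smul (a b c d : ℤ) (u w : ι → ℤ) :
    gram2 (a • u + b • w) (c • u + d • w) = (a * d - b * c) ^ 2 * gram2 u w := by
  simp only [gram2, idot_add_smul_left, idot_add_smul_right, idot_comm w u]
  ring

lemma latDet_fin_two (v : Fin 2 → ι → ℤ) : latDet v = √(gram2 (v 0) (v 1) : ℝ) := by
  rw [latDet, Matrix.det_fin_two]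
  simp only [Matrix.of_apply, gram2, idot_comm (v 1) (v 0), sq]

lemma cast_gram2 (u w : ι → ℤ) :
    (gram2 u w : ℝ) = inorm u ^ 2 * inorm w ^ 2 - (idot u w : ℝ) ^ 2 := by
  rw [inorm, inorm, Real.sq_sqrt (by positivity), Real.sq_sqrt (by positivity), gram2, idot, idot]
  push_cast
  simp only [sq]

lemma minorGcd_nonneg (u w : ι → ℤ) : 0 ≤ minorGcd u w :=
  Int.nonneg_of_normalize_eq_self Finset.normalize_gcd

lemma minorGcd_add_smul (a b c d : ℤ) (u w : ι → ℤ) :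
    minorGcd (a • u + b • w) (c • u + d • w) = |a * d - b * c| * minorGcd u w := by
  rw [minorGcd, minorGcd, Int.abs_eq_normalize, ← Finset.gcd_mul_left]
  refine Finset.gcd_congr rfl fun p _ => ?_
  simp only [Pi.add_apply, Pi.smul_apply, smul_eq_mul]
  ring

lemma minorGcd_ne_zero {u w : ι → ℤ} (h : LinearIndependent ℤ ![u, w]) : minorGcd u w ≠ 0 := by
  intro h0
  have hminor (i j : ι) : u i * w j - u j * w i = 0 :=
    Finset.gcd_eq_zero_iff.mp h0 (i, j) (Finset.mem_univ _)
  rw [LinearIndependent.pair_iff] at h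
  obtain ⟨j, hj⟩ : ∃ j, w j ≠ 0 := by
    by_contra! hw
    exact one_ne_zero (h 0 1 (by simp [show w = 0 from funext hw])).2
  have hrel : w j • u + (-u j) • w = 0 := by
    funext i
    simp only [Pi.add_apply, Pi.smul_apply, smul_eq_mul, Pi.zero_apply]
    linear_combination hminor i j
  exact hj (h _ _ hrel).1

/-- `ψ₀ ∧ ψ₁` is an integer combination of the `2 × 2` minors. -/
lemma minorGcd_dvd_wedge (u w : ι → ℤ) (ψ₀ ψ₁ : (ι → ℤ) →ₗ[ℤ] ℤ) :
    minorGcd u w ∣ ψ₀ u * ψ₁ w - ψ₀ w * ψ₁ u := by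
  classical
  rw [LinearMap.pi_apply_eq_sum_univ ψ₀ u, LinearMap.pi_apply_eq_sum_univ ψ₀ w,
    LinearMap.pi_apply_eq_sum_univ ψ₁ u, LinearMap.pi_apply_eq_sum_univ ψ₁ w,
    Finset.sum_mul_sum, Finset.sum_mul_sum, ← Finset.sum_sub_distrib]
  refine Finset.dvd_sum fun i _ => ?_
  rw [← Finset.sum_sub_distrib]
  refine Finset.dvd_sum fun j _ => ?_
  have hminor : minorGcd u w ∣ u i * w j - u j * w i := Finset.gcd_dvd (Finset.mem_univ (i, j))
  set e : ι → ι → ℤ := fun i j => if i = j then 1 else 0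
  convert hminor.mul_right (ψ₀ (e i) * ψ₁ (e j)) using 1
  ring

lemma minorGcd_basis_eq_one {κ : Type*} (b : Module.Basis κ ℤ (ι → ℤ)) {i j : κ} (hij : i ≠ j) :
    minorGcd (b i) (b j) = 1 := by
  refine Int.eq_one_of_dvd_one (minorGcd_nonneg _ _) ?_
  simpa [hij, hij.symm] using minorGcd_dvd_wedge (b i) (b j) (b.coord i) (b.coord j)

variable {x y : ι → ℤ}

lemma minorGcd_pos (h : LinearIndependent ℤ ![x, y]) : 0 < minorGcd x y :=
  (minorGcd_nonneg x y).lt_of_ne' (minorGcd_ne_zero h)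

lemma exists_gram2_minorGcd_of_mem_span {v : Fin 2 → ι → ℤ}
    (hx : x ∈ Submodule.span ℤ (Set.range v)) (hy : y ∈ Submodule.span ℤ (Set.range v)) :
    ∃ D : ℤ, gram2 x y = D ^ 2 * gram2 (v 0) (v 1) ∧
      minorGcd x y = |D| * minorGcd (v 0) (v 1) := by
  obtain ⟨p, rfl⟩ := (Submodule.mem_span_range_iff_exists_fun ℤ).mp hx
  obtain ⟨q, rfl⟩ := (Submodule.mem_span_range_iff_exists_fun ℤ).mp hy
  simp only [Fin.sum_univ_two]
  exact ⟨p 0 * q 1 - p 1 * q 0, gram2_add_smul .., minorGcd_add_smul ..⟩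

lemma latDet_mul_minorGcd {v : Fin 2 → ι → ℤ}
    (hxy : {x, y} ⊆ (Submodule.span ℤ (Set.range v) : Set (ι → ℤ))) :
    latDet v * minorGcd x y = √(gram2 x y : ℝ) * minorGcd (v 0) (v 1) := by
  obtain ⟨D, hgram, hgcd⟩ := exists_gram2_minorGcd_of_mem_span
    (hxy (Set.mem_insert x _)) (hxy (Set.mem_insert_of_mem x rfl))
  rw [latDet_fin_two, hgram, hgcd]
  push_cast
  rw [Real.sqrt_mul (sq_nonneg _), Real.sqrt_sq_eq_abs]
  ring

lemma sqrt_gram2_div_minorGcd_le_latDet (h : LinearIndependent ℤ ![x, y]) {v : Fin 2 → ι → ℤ}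
    (hxy : {x, y} ⊆ (Submodule.span ℤ (Set.range v) : Set (ι → ℤ))) :
    √(gram2 x y : ℝ) / minorGcd x y ≤ latDet v := by
  obtain ⟨D, -, hgcd⟩ := exists_gram2_minorGcd_of_mem_span
    (hxy (Set.mem_insert x _)) (hxy (Set.mem_insert_of_mem x rfl))
  have hv : (1 : ℝ) ≤ minorGcd (v 0) (v 1) := by
    have hne := right_ne_zero_of_mul (hgcd ▸ minorGcd_ne_zero h)
    have := minorGcd_nonneg (v 0) (v 1)
    exact_mod_cast (show 1 ≤ minorGcd (v 0) (v 1) by omega)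
  rw [div_le_iff₀ (by exact_mod_cast minorGcd_pos h), latDet_mul_minorGcd hxy]
  exact le_mul_of_one_le_right (Real.sqrt_nonneg _) hv

lemma exists_latDet_eq_sqrt_gram2_div_minorGcd (h : LinearIndependent ℤ ![x, y]) :
    ∃ v : Fin 2 → ι → ℤ, LinearIndependent ℤ v ∧
      {x, y} ⊆ (Submodule.span ℤ (Set.range v) : Set (ι → ℤ)) ∧
      latDet v = √(gram2 x y : ℝ) / minorGcd x y := by
  obtain ⟨b, f, hle⟩ := exists_basis_embedding_span_le (Pi.basisFun ℤ ι) h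
  have hxy : {x, y} ⊆ (Submodule.span ℤ (Set.range (b ∘ f)) : Set (ι → ℤ)) := by
    rw [← Matrix.range_cons_cons_empty x y ![]]
    exact Submodule.subset_span.trans hle
  refine ⟨b ∘ f, b.linearIndependent.comp f f.injective, hxy, ?_⟩
  have hprim : minorGcd ((b ∘ f) 0) ((b ∘ f) 1) = 1 :=
    minorGcd_basis_eq_one b (f.injective.ne Fin.zero_ne_one)
  rw [eq_div_iff (by exact_mod_cast (minorGcd_pos h).ne'), latDet_mul_minorGcd hxy, hprim,
    Int.cast_one, mul_one]

end

end LatticeMinDet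

open LatticeMinDet in
theorem stmt5_general (n : ℕ) (x y : Fin (n + 1) → ℤ)
    (h : LinearIndependent ℤ ![x, y]) :
    dmin n 2 {x, y} =
      Real.sqrt (inorm x ^ 2 * inorm y ^ 2 - ((idot x y : ℤ) : ℝ) ^ 2) /
        ((minorGcd x y : ℤ) : ℝ) := by
  rw [dmin, ← cast_gram2]
  refine IsLeast.csInf_eq ⟨?_, ?_⟩
  · obtain ⟨v, hv, hxy, hdet⟩ := exists_latDet_eq_sqrt_gram2_div_minorGcd h
    exact ⟨v, hv, hxy, hdet.symm⟩
  · rintro t ⟨v, -, hxy, rfl⟩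
    exact sqrt_gram2_div_minorGcd_le_latDet h hxy

/-- For `n ≥ 1` and linearly independent `x, y ∈ ℤ^{n+1}`,
`𝔡₂(x,y) = sqrt(‖x‖²‖y‖² − ⟨x,y⟩²) / G(x,y)`. -/
theorem stmt5 (n : ℕ) (hn : 1 ≤ n) (x y : Fin (n + 1) → ℤ)
    (h : LinearIndependent ℤ ![x, y]) :
    dmin n 2 {x, y} =
      Real.sqrt (inorm x ^ 2 * inorm y ^ 2 - ((idot x y : ℤ) : ℝ) ^ 2) /
        ((minorGcd x y : ℤ) : ℝ) :=
  stmt5_general n x y h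
end
end

section
/- Let n ≥ 2 and r ∈ {1,…,n+1}. For any s₁,…,s_r ≥ 1, the number of primitive rank-r sublattices L ⊂ ℤ^{n+1} whose successive minima satisfy λ_j(L) ∈ (s_j/2, s_j] for all j equals O(s₁^{n+r} s₂^{n+r−2} ⋯ s_r^{n−r+2}), with implied constant depending only on n. -/
noncomputable section

/-- The `i`-th successive minimum (w.r.t. the Euclidean unit ball) of `Λ ⊆ ℤ^ι`. -/
def succMin {ι : Type*} [Fintype ι] (Λ : Set (ι → ℤ)) (i : ℕ) : ℝ :=
  sInf {u : ℝ | 0 < u ∧ i ≤ Module.finrank ℝ (Submodule.span ℝ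
    ((fun z : ι → ℤ => fun k => ((z k : ℝ))) '' {z ∈ Λ | inorm z ≤ u}))}

/-- A sublattice `L ⊆ ℤ^{n+1}` is primitive if `Span_ℝ(L) ∩ ℤ^{n+1} = L`. -/
def IsPrimitiveLattice {n : ℕ} (L : Submodule ℤ (Fin (n + 1) → ℤ)) : Prop :=
  ∀ z : Fin (n + 1) → ℤ,
    ((fun k => ((z k : ℝ))) ∈ Submodule.span ℝ
      ((fun w : Fin (n + 1) → ℤ => fun k => ((w k : ℝ))) '' (L : Set (Fin (n + 1) → ℤ)))) →
    z ∈ L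

/-!
For `L` in the family, the successive minima give linearly independent `w_j ∈ L` with
`‖w_j‖ ≤ 2 s_j`. Adding to each `w_j` nonnegative integer multiples `a_{ji} w_i` (`i < j`) with
`a_{ji} ≤ s_j / ((n+1) ‖w_i‖)` produces `≫ ∏_{i<j} s_j / s_i` distinct linearly independent
`r`-tuples in `L` of lengths `≤ 3 s_j`, and by primitivity each of them determines `L` as the set
of integer points of its real span. All these tuples lie in a box with `∏_j (7 s_j)^{n+1}` integer
points, so the number of lattices is `≪ ∏_j s_j^{n+1} ∏_{i<j} s_i / s_j = ∏_j s_j^{n+r-2j}`.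
-/

open Finset Module Submodule

section IntegerVectors

variable {ι : Type*}

def castVec : (ι → ℤ) →ₗ[ℤ] ι → ℝ := (Int.castAddHom ℝ).toIntLinearMap.compLeft ι

@[simp]
lemma castVec_apply (z : ι → ℤ) (k : ι) : castVec z k = z k := rfl

lemma castVec_injective : Function.Injective (castVec : (ι → ℤ) → ι → ℝ) :=
  fun _ _ h => funext fun k => Int.cast_injective (congrFun h k)

variable [Fintype ι]

lemma inorm_eq_norm (z : ι → ℤ) : inorm z = ‖WithLp.toLp 2 (castVec z)‖ := by
  simp [inorm, EuclideanSpace.norm_eq]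

lemma inorm_add_le (x y : ι → ℤ) : inorm (x + y) ≤ inorm x + inorm y := by
  simpa only [inorm_eq_norm, map_add, WithLp.toLp_add] using norm_add_le _ _

lemma inorm_nsmul (a : ℕ) (z : ι → ℤ) : inorm (a • z) = a * inorm z := by
  rw [inorm_eq_norm, inorm_eq_norm, map_nsmul, ← Nat.cast_smul_eq_nsmul ℝ, WithLp.toLp_smul,
    norm_smul, Real.norm_natCast]

lemma inorm_pos {z : ι → ℤ} (hz : z ≠ 0) : 0 < inorm z := by
  rw [inorm_eq_norm, norm_pos_iff]
  simpa [map_eq_zero_iff _ castVec_injective] using hz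

lemma abs_le_inorm (z : ι → ℤ) (k : ι) : |(z k : ℝ)| ≤ inorm z := by
  simpa [inorm_eq_norm] using PiLp.norm_apply_le (WithLp.toLp 2 (castVec z)) k

lemma inorm_sum_le {κ : Type*} (s : Finset κ) (v : κ → ι → ℤ) :
    inorm (∑ i ∈ s, v i) ≤ ∑ i ∈ s, inorm (v i) := by
  simpa only [inorm_eq_norm, map_sum, WithLp.toLp_sum] using norm_sum_le _ _

lemma inorm_add_sum_nsmul_le {κ : Type*} (s : Finset κ) (x : ι → ℤ) (a : κ → ℕ) (v : κ → ι → ℤ)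
    {B : ℝ} (h : ∀ i ∈ s, a i * inorm (v i) ≤ B) :
    inorm (x + ∑ i ∈ s, a i • v i) ≤ inorm x + #s * B := by
  grw [inorm_add_le, inorm_sum_le, ← nsmul_eq_mul, ← sum_le_card_nsmul s _ B h]
  simp only [inorm_nsmul, le_refl]

end IntegerVectors

section Balls

variable (ι : Type*) [Fintype ι] [DecidableEq ι]

def intBall (R : ℝ) : Finset (ι → ℤ) :=
  {z ∈ Fintype.piFinset fun _ => Icc (-⌊R⌋) ⌊R⌋ | inorm z ≤ R}

variable {ι}

lemma mem_intBall {R : ℝ} {z : ι → ℤ} : z ∈ intBall ι R ↔ inorm z ≤ R := by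
  refine ⟨fun h => (mem_filter.mp h).2, fun h => mem_filter.mpr ⟨?_, h⟩⟩
  refine Fintype.mem_piFinset.mpr fun k => mem_Icc.mpr ?_
  have hk := (abs_le_inorm z k).trans h
  rwa [← Int.cast_abs, ← Int.le_floor, abs_le] at hk

lemma card_intBall_le {R : ℝ} (hR : 0 ≤ R) :
    (#(intBall ι R) : ℝ) ≤ (2 * R + 1) ^ Fintype.card ι := by
  have hfloor : 0 ≤ ⌊R⌋ := Int.floor_nonneg.mpr hR
  have hIcc : (#(Icc (-⌊R⌋) ⌊R⌋) : ℝ) = 2 * ⌊R⌋ + 1 := by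
    rw [Int.card_Icc, ← Int.cast_natCast, Int.toNat_of_nonneg (by omega)]
    push_cast
    ring
  calc (#(intBall ι R) : ℝ) ≤ #(Fintype.piFinset fun _ : ι => Icc (-⌊R⌋) ⌊R⌋) := by
        exact_mod_cast card_filter_le _ _
    _ = (2 * ⌊R⌋ + 1) ^ Fintype.card ι := by
        rw [Fintype.card_piFinset, prod_const, Nat.cast_pow, hIcc, card_univ]
    _ ≤ (2 * R + 1) ^ Fintype.card ι := by
        gcongr
        exact Int.floor_le R

variable {κ : Type*} [Fintype κ] [DecidableEq κ]

def tupleBall (R : κ → ℝ) : Finset (κ → ι → ℤ) := Fintype.piFinset fun j => intBall ι (R j)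

lemma mem_tupleBall {R : κ → ℝ} {u : κ → ι → ℤ} : u ∈ tupleBall R ↔ ∀ j, inorm (u j) ≤ R j := by
  simp [tupleBall, mem_intBall]

lemma card_tupleBall_le {R : κ → ℝ} (hR : ∀ j, 0 ≤ R j) :
    (#(tupleBall (ι := ι) R) : ℝ) ≤ ∏ j, (2 * R j + 1) ^ Fintype.card ι := by
  rw [tupleBall, Fintype.card_piFinset, Nat.cast_prod]
  exact prod_le_prod (fun _ _ => Nat.cast_nonneg _) fun j _ => card_intBall_le (hR j)

end Balls

section ShortVectors

variable {ι : Type*} [Fintype ι] {Λ : Set (ι → ℤ)}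

lemma succMin_eq (i : ℕ) : succMin Λ i =
    sInf {u : ℝ | 0 < u ∧ i ≤ finrank ℝ (span ℝ (castVec '' {z ∈ Λ | inorm z ≤ u}))} :=
  rfl

lemma le_finrank_span_of_succMin_lt {i : ℕ} {u : ℝ} (h0 : 0 < succMin Λ i)
    (hu : succMin Λ i < u) : i ≤ finrank ℝ (span ℝ (castVec '' {z ∈ Λ | inorm z ≤ u})) := by
  rw [succMin_eq] at h0 hu
  set U := {v : ℝ | 0 < v ∧ i ≤ finrank ℝ (span ℝ (castVec '' {z ∈ Λ | inorm z ≤ v}))}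
  have hne : U.Nonempty := Set.nonempty_iff_ne_empty.mpr fun h => by
    rw [h, Real.sInf_empty] at h0
    exact lt_irrefl 0 h0
  obtain ⟨v, ⟨-, hv⟩, hvu⟩ := (csInf_lt_iff ⟨0, fun _ h => h.1.le⟩ hne).mp hu
  exact hv.trans (finrank_mono (span_mono (Set.image_mono fun z hz => ⟨hz.1, hz.2.trans hvu.le⟩)))

lemma exists_short_linearIndependent_of_le_finrank : ∀ {r : ℕ} (R : Fin r → ℝ),
    (∀ j : Fin r, (j : ℕ) + 1 ≤ finrank ℝ (span ℝ (castVec '' {z ∈ Λ | inorm z ≤ R j}))) →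
    ∃ w : Fin r → ι → ℤ, (∀ j, w j ∈ Λ) ∧ (∀ j, inorm (w j) ≤ R j) ∧
      LinearIndependent ℝ (castVec ∘ w)
  | 0, _, _ => ⟨finZeroElim, finZeroElim, finZeroElim, linearIndependent_empty_type⟩
  | r + 1, R, hR => by
    obtain ⟨w, hwΛ, hwR, hw⟩ :=
      exists_short_linearIndependent_of_le_finrank (R ∘ Fin.castSucc) fun j => hR j.castSucc
    obtain ⟨-, ⟨z, hz, rfl⟩, hz_span⟩ : ∃ x ∈ castVec '' {z ∈ Λ | inorm z ≤ R (Fin.last r)},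
        x ∉ span ℝ (Set.range (castVec ∘ w)) := by
      by_contra! h
      have := (hR (Fin.last r)).trans (finrank_mono (span_le.mpr h))
      rw [finrank_span_eq_card hw, Fintype.card_fin, Fin.val_last] at this
      omega
    refine ⟨Fin.snoc w z, Fin.lastCases (by simpa using hz.1) fun j => by simpa using hwΛ j,
      Fin.lastCases (by simpa using hz.2) fun j => by simpa using hwR j, ?_⟩
    rw [Fin.comp_snoc, linearIndependent_finSnoc]
    exact ⟨hw, hz_span⟩

end ShortVectors

section SaturatedSpan

variable {ι : Type*} [Fintype ι]

def saturatedSpan {κ : Type*} (u : κ → ι → ℤ) : Submodule ℤ (ι → ℤ) :=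
  ((span ℝ (Set.range (castVec ∘ u))).restrictScalars ℤ).comap castVec

lemma finrank_span_castVec_image_le (L : Submodule ℤ (ι → ℤ)) :
    finrank ℝ (span ℝ (castVec '' (L : Set (ι → ℤ)))) ≤ finrank ℤ L := by
  let b := Module.finBasis ℤ L
  let f := castVec ∘ₗ L.subtype
  have himage : castVec '' (L : Set (ι → ℤ)) ⊆ span ℝ (Set.range (f ∘ b)) := by
    rintro - ⟨z, hz, rfl⟩
    have hspan : (⟨z, hz⟩ : L) ∈ span ℤ (Set.range b) := b.span_eq ▸ mem_top
    have := Submodule.mem_map_of_mem (f := f) hspan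
    rw [map_span, ← Set.range_comp] at this
    exact span_le_restrictScalars ℤ ℝ _ this
  calc finrank ℝ (span ℝ (castVec '' (L : Set (ι → ℤ))))
      ≤ finrank ℝ (span ℝ (Set.range (f ∘ b))) := finrank_mono (span_le.mpr himage)
    _ ≤ finrank ℤ L := (finrank_range_le_card _).trans (Fintype.card_fin _).le

lemma IsPrimitiveLattice.saturatedSpan_eq {n r : ℕ} {L : Submodule ℤ (Fin (n + 1) → ℤ)}
    (hL : IsPrimitiveLattice L) (hrank : finrank ℤ L ≤ r) {u : Fin r → Fin (n + 1) → ℤ}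
    (hu : ∀ j, u j ∈ L) (hli : LinearIndependent ℝ (castVec ∘ u)) : saturatedSpan u = L := by
  have hspan : span ℝ (Set.range (castVec ∘ u)) = span ℝ (castVec '' (L : Set _)) := by
    refine eq_of_le_of_finrank_le (span_mono ?_) ?_
    · rintro - ⟨j, rfl⟩
      exact Set.mem_image_of_mem _ (hu j)
    · rw [finrank_span_eq_card hli, Fintype.card_fin]
      exact (finrank_span_castVec_image_le L).trans hrank
  ext z
  rw [saturatedSpan, mem_comap, restrictScalars_mem, hspan]
  exact ⟨hL z, fun hz => subset_span (Set.mem_image_of_mem _ hz)⟩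

end SaturatedSpan

section Unitriangular

variable {r : ℕ}

lemma LinearIndependent.add_sum_Iio_smul {K V : Type*} [Field K] [AddCommGroup V] [Module K V]
    {v : Fin r → V} (hv : LinearIndependent K v) (c : Fin r → Fin r → K) :
    LinearIndependent K fun j => v j + ∑ i ∈ Iio j, c j i • v i := by
  set v' := fun j => v j + ∑ i ∈ Iio j, c j i • v i
  have hmem (j : Fin r) : v j ∈ span K (Set.range v') := by
    induction j using WellFoundedLT.induction with
    | _ j ih =>
      have hj : v j = v' j - ∑ i ∈ Iio j, c j i • v i := by simp [v']
      rw [hj]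
      exact sub_mem (subset_span (Set.mem_range_self j))
        (sum_mem fun i hi => smul_mem _ _ (ih i (mem_Iio.mp hi)))
  rw [linearIndependent_iff_card_eq_finrank_span]
  refine le_antisymm ?_ (finrank_range_le_card v')
  rw [linearIndependent_iff_card_eq_finrank_span.mp hv]
  have := FiniteDimensional.span_of_finite K (Set.finite_range v')
  exact finrank_mono (span_le.mpr (Set.range_subset_iff.mpr hmem))

lemma LinearIndependent.injOn_add_sum_Iio_nsmul {M : Type*} [AddCommGroup M] {v : Fin r → M}
    (hv : LinearIndependent ℤ v) :
    Set.InjOn (fun (a : Fin r → Fin r → ℕ) j => v j + ∑ i ∈ Iio j, a j i • v i)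
      {a | ∀ j i, j ≤ i → a j i = 0} := by
  intro a ha a' ha' h
  funext j i
  rcases lt_or_ge i j with hij | hji
  · have hsum := add_left_cancel (congrFun h j)
    have := linearIndependent_iff'.mp hv (Iio j) (fun i => (a j i : ℤ) - a' j i)
      (by simp [sub_smul, sum_sub_distrib, hsum]) i (mem_Iio.mpr hij)
    omega
  · rw [ha j i hji, ha' j i hji]

end Unitriangular

section Counting

variable {r : ℕ}

lemma prod_prod_Iio_le_prod_prod_floor_add_one {f : Fin r → Fin r → ℝ} (hf : ∀ j i, 0 ≤ f j i) :
    ∏ j, ∏ i ∈ Iio j, f j i ≤ ∏ j, ∏ i, (((if i < j then ⌊f j i⌋₊ else 0 : ℕ) : ℝ) + 1) := by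
  refine prod_le_prod (fun j _ => prod_nonneg fun i _ => hf j i) fun j _ => ?_
  rw [← filter_gt_eq_Iio, prod_filter]
  refine prod_le_prod (fun i _ => by split_ifs; exacts [hf j i, zero_le_one]) fun i _ => ?_
  split_ifs
  · exact_mod_cast (Nat.lt_floor_add_one _).le
  · simp

variable {ι : Type*} [Fintype ι] [DecidableEq ι]

open scoped Classical in
lemma prod_le_card_filter_linearIndependent {N : ℕ} (hrN : r ≤ N) {L : Submodule ℤ (ι → ℤ)}
    {w : Fin r → ι → ℤ} (hwL : ∀ j, w j ∈ L) (hw : LinearIndependent ℝ (castVec ∘ w))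
    {ρ σ R : Fin r → ℝ} (hwρ : ∀ j, inorm (w j) ≤ ρ j) (hσ : ∀ j, 0 ≤ σ j)
    (hR : ∀ j, ρ j + σ j ≤ R j) :
    ∏ j, ∏ i ∈ Iio j, σ j / (N * ρ i) ≤
      #{u ∈ tupleBall R | (∀ j, u j ∈ L) ∧ LinearIndependent ℝ (castVec ∘ u)} := by
  have hρ (i : Fin r) : 0 < ρ i :=
    (inorm_pos fun h => hw.ne_zero i (by simp [h])).trans_le (hwρ i)
  have hN (j : Fin r) : (0 : ℝ) < N := by exact_mod_cast j.pos.trans_le hrN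
  let A (j i : Fin r) : ℕ := if i < j then ⌊σ j / (N * ρ i)⌋₊ else 0
  let D : Finset (Fin r → Fin r → ℕ) :=
    Fintype.piFinset fun j => Fintype.piFinset fun i => range (A j i + 1)
  -- `Φ a` is a unitriangular transform of `w`, and `a ≤ A` keeps `‖Φ a j - w j‖ ≤ j σ j / N`.
  let Φ (a : Fin r → Fin r → ℕ) (j : Fin r) : ι → ℤ := w j + ∑ i ∈ Iio j, a j i • w i
  have hD {a} (ha : a ∈ D) (j i : Fin r) : a j i ≤ A j i := by
    simpa [D, Nat.lt_succ_iff] using Fintype.mem_piFinset.mp (Fintype.mem_piFinset.mp ha j) i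
  have hstep {a} (ha : a ∈ D) (j : Fin r) : ∀ i ∈ Iio j, a j i * inorm (w i) ≤ σ j / N := by
    intro i hi
    have hA : (a j i : ℝ) ≤ σ j / N / ρ i := by
      have := hD ha j i
      simp only [A, if_pos (mem_Iio.mp hi)] at this
      rw [div_div]
      exact (Nat.cast_le.mpr this).trans (Nat.floor_le (by have := hσ j; have := hρ i; positivity))
    rw [le_div_iff₀ (hρ i)] at hA
    exact (mul_le_mul_of_nonneg_left (hwρ i) (Nat.cast_nonneg _)).trans hA
  have hmaps (a : Fin r → Fin r → ℕ) (ha : a ∈ D) :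
      Φ a ∈ {u ∈ tupleBall (ι := ι) R | (∀ j, u j ∈ L) ∧ LinearIndependent ℝ (castVec ∘ u)} := by
    refine mem_filter.mpr ⟨mem_tupleBall.mpr fun j => ?_, fun j => ?_, ?_⟩
    · grw [inorm_add_sum_nsmul_le _ _ _ _ (hstep ha j), Fin.card_Iio, hwρ j, ← hR j]
      gcongr
      calc (j : ℝ) * (σ j / N) ≤ N * (σ j / N) := by
            gcongr
            · exact div_nonneg (hσ j) (hN j).le
            · exact_mod_cast j.is_lt.le.trans hrN
        _ = σ j := mul_div_cancel₀ _ (hN j).ne'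
    · exact add_mem (hwL j) (sum_mem fun i _ => nsmul_mem (hwL i) _)
    · have hΦ : castVec ∘ Φ a =
          fun j => castVec (w j) + ∑ i ∈ Iio j, (a j i : ℝ) • castVec (w i) := by
        funext j
        simp only [Φ, Function.comp_apply, map_add, map_sum, map_nsmul, Nat.cast_smul_eq_nsmul]
      rw [hΦ]
      exact hw.add_sum_Iio_smul fun j i => (a j i : ℝ)
  have hinj : Set.InjOn Φ D := by
    refine ((hw.restrict_scalars' ℤ).of_comp _).injOn_add_sum_Iio_nsmul.mono fun a ha => ?_
    intro j i hji
    simpa [A, not_lt.mpr hji] using hD ha j i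
  calc ∏ j, ∏ i ∈ Iio j, σ j / (N * ρ i) ≤ ∏ j, ∏ i, ((A j i : ℝ) + 1) :=
        prod_prod_Iio_le_prod_prod_floor_add_one fun j i => by
          have := hσ j; have := hρ i; positivity
    _ = #D := by simp [D]
    _ ≤ _ := by exact_mod_cast card_le_card_of_injOn Φ hmaps hinj

end Counting

lemma Set.finite_and_ncard_mul_le_of_le_card_fiber {α β : Type*} [DecidableEq β] {S : Set β}
    {T : Finset α} (f : α → β) {m : ℝ} (hm : 0 < m) (hS : ∀ b ∈ S, m ≤ #{a ∈ T | f a = b}) :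
    S.Finite ∧ S.ncard * m ≤ #T := by
  have hfin : S.Finite := (T.finite_toSet.image f).subset fun b hb => by
    obtain ⟨a, ha⟩ := card_pos.mp (by exact_mod_cast hm.trans_le (hS b hb))
    exact ⟨a, (mem_filter.mp ha).1, (mem_filter.mp ha).2⟩
  refine ⟨hfin, ?_⟩
  rw [Set.ncard_eq_toFinset_card S hfin, ← nsmul_eq_mul]
  calc #hfin.toFinset • m ≤ ∑ b ∈ hfin.toFinset, (#{a ∈ T | f a = b} : ℝ) :=
        card_nsmul_le_sum _ _ _ fun b hb => hS b (hfin.mem_toFinset.mp hb)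
    _ = #{a ∈ T | f a ∈ hfin.toFinset} := by exact_mod_cast sum_card_fiberwise_eq_card_filter _ _ _
    _ ≤ #T := by exact_mod_cast card_filter_le _ _

section Products

variable {r : ℕ}

lemma prod_prod_Iio_eq_prod_pow {M : Type*} [CommMonoid M] (t : Fin r → M) :
    ∏ j, ∏ i ∈ Iio j, t i = ∏ i, t i ^ (r - 1 - i) := by
  rw [prod_comm' (t' := univ) (s' := Ioi) (by simp)]
  simp [Fin.card_Ioi]

lemma prod_prod_Iio_div_mul_prod_pow {n : ℕ} (hrn : r ≤ n + 1) {s : Fin r → ℝ}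
    (hs : ∀ j, s j ≠ 0) :
    (∏ j, ∏ i ∈ Iio j, s j / s i) * ∏ j, s j ^ (n + r - 2 * j) = ∏ j, s j ^ (n + 1) := by
  simp only [prod_div_distrib, prod_const, Fin.card_Iio, prod_prod_Iio_eq_prod_pow]
  rw [div_mul_eq_mul_div, div_eq_iff (prod_ne_zero_iff.mpr fun j _ => pow_ne_zero _ (hs j)),
    ← prod_mul_distrib, ← prod_mul_distrib]
  refine prod_congr rfl fun j _ => ?_
  rw [← pow_add, ← pow_add]
  congr 1
  omega

end Products

lemma le_of_mul_prod_prod_Iio_le {n r : ℕ} (hrn : r ≤ n + 1) {s : Fin r → ℝ} (hs : ∀ j, 0 < s j)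
    {x : ℝ} (h : x * ∏ j, ∏ i ∈ Iio j, s j / ((n + 1 : ℕ) * (2 * s i)) ≤ ∏ j, (7 * s j) ^ (n + 1)) :
    x ≤ (14 * (n + 1)) ^ ((n + 1) ^ 2) * ∏ j, s j ^ (n + r - 2 * j) := by
  set c : ℝ := 2 * (n + 1)
  set K := ∑ j : Fin r, (j : ℕ)
  set P := ∏ j, ∏ i ∈ Iio j, s j / s i
  set Q := ∏ j, s j ^ (n + r - 2 * j)
  have hP : 0 < P := prod_pos fun j _ => prod_pos fun i _ => div_pos (hs j) (hs i)
  have hc : 0 < c := by positivity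
  have hpairs : ∏ j, ∏ i ∈ Iio j, s j / ((n + 1 : ℕ) * (2 * s i)) = P / c ^ K := by
    have (j i : Fin r) : s j / ((n + 1 : ℕ) * (2 * s i)) = s j / s i / c := by
      push_cast [c]
      rw [div_div]
      ring
    simp only [this, prod_div_distrib, prod_const, Fin.card_Iio, prod_pow_eq_pow_sum, P, K]
  have hseven : ∏ j, (7 * s j) ^ (n + 1) = 7 ^ (r * (n + 1)) * (P * Q) := by
    rw [prod_prod_Iio_div_mul_prod_pow hrn fun j => (hs j).ne']
    simp only [mul_pow, prod_mul_distrib, prod_const, card_univ, Fintype.card_fin, ← pow_mul,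
      mul_comm (n + 1)]
  have hK : K ≤ (n + 1) ^ 2 := by
    have := sum_le_card_nsmul univ (fun j : Fin r => (j : ℕ)) r fun j _ => j.is_lt.le
    rw [card_univ, Fintype.card_fin, smul_eq_mul] at this
    exact this.trans (by nlinarith)
  rw [hpairs, hseven] at h
  have hx : x ≤ 7 ^ (r * (n + 1)) * c ^ K * Q := by
    refine le_of_mul_le_mul_right ?_ hP
    calc x * P = x * (P / c ^ K) * c ^ K := by field_simp
      _ ≤ 7 ^ (r * (n + 1)) * (P * Q) * c ^ K := by gcongr
      _ = 7 ^ (r * (n + 1)) * c ^ K * Q * P := by ring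
  calc x ≤ 7 ^ (r * (n + 1)) * c ^ K * Q := hx
    _ ≤ 7 ^ ((n + 1) ^ 2) * c ^ ((n + 1) ^ 2) * Q := by
        gcongr
        · exact prod_nonneg fun j _ => pow_nonneg (hs j).le _
        · norm_num
        · nlinarith
        · simp [c]; linarith
    _ = (14 * (n + 1)) ^ ((n + 1) ^ 2) * Q := by rw [← mul_pow]; ring

open scoped Classical in
lemma prod_le_card_filter_saturatedSpan_eq {n r : ℕ} (hrn : r ≤ n + 1) {s : Fin r → ℝ}
    (hs : ∀ j, 0 < s j) {L : Submodule ℤ (Fin (n + 1) → ℤ)} (hrank : finrank ℤ L = r)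
    (hprim : IsPrimitiveLattice L)
    (hmin : ∀ j : Fin r, s j / 2 < succMin (L : Set (Fin (n + 1) → ℤ)) ((j : ℕ) + 1) ∧
      succMin (L : Set (Fin (n + 1) → ℤ)) ((j : ℕ) + 1) ≤ s j) :
    ∏ j, ∏ i ∈ Iio j, s j / ((n + 1 : ℕ) * (2 * s i)) ≤
      #{u ∈ tupleBall (ι := Fin (n + 1)) (fun j => 3 * s j) | saturatedSpan u = L} := by
  obtain ⟨w, hwL, hw2s, hw⟩ := exists_short_linearIndependent_of_le_finrank (fun j => 2 * s j)
    fun j => le_finrank_span_of_succMin_lt (by linarith [hmin j, hs j]) (by linarith [hmin j, hs j])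
  refine (prod_le_card_filter_linearIndependent hrn hwL hw hw2s (fun j => (hs j).le)
    (R := fun j => 3 * s j) (fun j => by linarith)).trans (Nat.cast_le.mpr (card_le_card ?_))
  refine fun u hu => mem_filter.mpr ⟨(mem_filter.mp hu).1, ?_⟩
  obtain ⟨huL, hu⟩ := (mem_filter.mp hu).2
  exact hprim.saturatedSpan_eq hrank.le huL hu

theorem stmt9_general (n : ℕ) :
    ∃ C : ℝ, 0 < C ∧ ∀ r : ℕ, 1 ≤ r → r ≤ n + 1 → ∀ s : Fin r → ℝ, (∀ j, 1 ≤ s j) →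
      (let S : Set (Submodule ℤ (Fin (n + 1) → ℤ)) :=
        {L | Module.finrank ℤ ↥L = r ∧ IsPrimitiveLattice L ∧
          ∀ j : Fin r, s j / 2 < succMin (L : Set (Fin (n + 1) → ℤ)) ((j : ℕ) + 1) ∧
            succMin (L : Set (Fin (n + 1) → ℤ)) ((j : ℕ) + 1) ≤ s j}
      S.Finite ∧ (S.ncard : ℝ) ≤ C * ∏ j : Fin r, s j ^ (n + r - 2 * (j : ℕ))) := by
  refine ⟨(14 * (n + 1)) ^ ((n + 1) ^ 2), by positivity, fun r _ hrn s hs => ?_⟩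
  intro S
  have hs0 (j : Fin r) : 0 < s j := one_pos.trans_le (hs j)
  obtain ⟨hfin, hcount⟩ := Set.finite_and_ncard_mul_le_of_le_card_fiber (S := S) saturatedSpan
    (prod_pos fun j _ => prod_pos fun i _ => by have := hs0 i; have := hs0 j; positivity)
    fun L hL => prod_le_card_filter_saturatedSpan_eq hrn hs0 hL.1 hL.2.1 hL.2.2
  refine ⟨hfin, le_of_mul_prod_prod_Iio_le hrn hs0 (hcount.trans ?_)⟩
  refine (card_tupleBall_le fun j => (by linarith [hs0 j])).trans
    (prod_le_prod (fun j _ => by have := hs0 j; positivity) fun j _ => ?_)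
  rw [Fintype.card_fin]
  exact pow_le_pow_left₀ (by linarith [hs0 j]) (by linarith [hs j]) _

/-- Let `n ≥ 2` and `r ∈ {1,…,n+1}`. For any `s₁,…,s_r ≥ 1`, the number
of primitive rank-`r` sublattices `L ⊆ ℤ^{n+1}` with `λ_j(L) ∈ (s_j/2, s_j]` for all `j`
is `O(s₁^{n+r} s₂^{n+r−2} ⋯ s_r^{n−r+2})`, with implied constant depending only on `n`. -/
theorem stmt9 (n : ℕ) (hn : 2 ≤ n) :
    ∃ C : ℝ, 0 < C ∧ ∀ r : ℕ, 1 ≤ r → r ≤ n + 1 → ∀ s : Fin r → ℝ, (∀ j, 1 ≤ s j) →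
      (let S : Set (Submodule ℤ (Fin (n + 1) → ℤ)) :=
        {L | Module.finrank ℤ ↥L = r ∧ IsPrimitiveLattice L ∧
          ∀ j : Fin r, s j / 2 < succMin (L : Set (Fin (n + 1) → ℤ)) ((j : ℕ) + 1) ∧
            succMin (L : Set (Fin (n + 1) → ℤ)) ((j : ℕ) + 1) ≤ s j}
      S.Finite ∧ (S.ncard : ℝ) ≤ C * ∏ j : Fin r, s j ^ (n + r - 2 * (j : ℕ))) :=
  stmt9_general n
end
end

section
/- Let N ≥ 3 and let w, z ∈ ℝ^N be linearly independent. Set δ = ‖w‖²‖z‖² − ⟨w,z⟩² and let I(w,z) be the (N−1)-dimensional volume of { t ∈ (ℝw)^⊥ : |⟨z,t⟩| ≤ ‖t‖ ≤ 1 }. Then I(w,z) = 2·((N−2)/(N−1))·V_{N−2}·(‖w‖/δ^{1/2})·(1 + O(min{1, ‖w‖²/δ})), where V_{N−2} is the volume of the unit ball in ℝ^{N−2} and the implied constant depends only on N. -/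
open MeasureTheory

noncomputable section

/-- The volume of the unit ball in `ℝ^k` (Euclidean). -/
def ballVol (k : ℕ) : ℝ :=
  (volume (Metric.ball (0 : EuclideanSpace ℝ (Fin k)) 1)).toReal

/-- The `(N−1)`-dimensional volume `I(w,z)` of
`{ t ∈ (ℝw)^⊥ : |⟨z,t⟩| ≤ ‖t‖ ≤ 1 }`. -/
def Ivol (N : ℕ) (w z : EuclideanSpace ℝ (Fin N)) : ℝ :=
  (volume {t : ↥(Submodule.span ℝ {w})ᗮ |
    |(inner ℝ z (t : EuclideanSpace ℝ (Fin N)) : ℝ)| ≤ ‖t‖ ∧ ‖t‖ ≤ 1}).toReal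

/-!
Let `z'` be the projection of `z` to `(ℝw)^⊥` and `a = ‖z'‖`, so that `δ = (‖w‖ a)²`. In an
orthonormal basis of `(ℝw)^⊥` starting with `z' / a` we have `⟨z, t⟩ = a t₀`, so `I(w,z)` is the
volume of `{x ∈ ℝ^(m+1) : a |x₀| ≤ ‖x‖ ≤ 1}` with `m = N - 2`, and the claim reads
`vol = (K / a) (1 + O(min (1, a⁻²)))` with `K = 2 (m / (m+1)) V_m`.
Writing `x = (y, t)` with `y ∈ ℝ^m`, for `a ≥ 2` this set lies between the double cones
`|t| ≤ ‖y‖ / √(a² - 1)` over the balls of radii `√(a² - 1) / a` and `1`; the cone of slope `c` over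
the ball of radius `r` has volume `K c r^(m+1)`, and both bounds are `(K / a) (1 + O(a⁻²))`.
For `a < 2` both the volume and `K / a` are `O(1)` while `min (1, a⁻²) ≥ 1/4`.
-/

open Metric Set Module RealInnerProductSpace

theorem ballVol_pos (k : ℕ) : 0 < ballVol k :=
  ENNReal.toReal_pos (measure_ball_pos _ _ one_pos).ne' measure_ball_lt_top.ne

section RadialIntegral

variable {E : Type*} [NormedAddCommGroup E] [NormedSpace ℝ E] [FiniteDimensional ℝ E]
  [MeasurableSpace E] [BorelSpace E] (μ : Measure E) [μ.IsAddHaarMeasure]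

theorem integral_norm_closedBall {r : ℝ} (hr : 0 ≤ r) :
    ∫ y in closedBall (0 : E) r, ‖y‖ ∂μ =
      finrank ℝ E / (finrank ℝ E + 1) * μ.real (ball 0 1) * r ^ (finrank ℝ E + 1) := by
  rcases Nat.eq_zero_or_pos (finrank ℝ E) with hd | hd
  · have : Subsingleton E := finrank_zero_iff.1 hd
    simp [hd, norm_of_subsingleton]
  have : Nontrivial E := finrank_pos_iff.1 hd
  have hradial : ∫ s in Ioi (0 : ℝ), s ^ (finrank ℝ E - 1) • (Iic r).indicator id s =
      r ^ (finrank ℝ E + 1) / (finrank ℝ E + 1) := by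
    have hpow : ∀ s : ℝ, s ^ (finrank ℝ E - 1) * s = s ^ finrank ℝ E := fun s => by
      rw [← pow_succ, Nat.sub_add_cancel hd]
    have hind : (fun s : ℝ => s ^ (finrank ℝ E - 1) • (Iic r).indicator id s) =
        (Iic r).indicator (· ^ finrank ℝ E) := by
      ext s; by_cases hs : s ≤ r <;> simp [hs, hpow]
    rw [hind, setIntegral_indicator measurableSet_Iic, Ioi_inter_Iic,
      ← intervalIntegral.integral_of_le hr, integral_pow]
    simp
  have hind : (closedBall (0 : E) r).indicator (‖·‖) = fun y => (Iic r).indicator id ‖y‖ := by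
    ext y; by_cases hy : ‖y‖ ≤ r <;> simp [indicator, hy]
  rw [← integral_indicator measurableSet_closedBall, hind, integral_fun_norm_addHaar μ, hradial,
    nsmul_eq_mul, smul_eq_mul]
  field_simp

end RadialIntegral

section DoubleCone

variable {E : Type*} [NormedAddCommGroup E]

def doubleCone (c r : ℝ) : Set (E × ℝ) :=
  {p | ‖p.1‖ ≤ r ∧ |p.2| ≤ c * ‖p.1‖}

theorem prod_volume_doubleCone [NormedSpace ℝ E] [FiniteDimensional ℝ E] [MeasurableSpace E]
    [BorelSpace E] (μ : Measure E) [μ.IsAddHaarMeasure] {c r : ℝ} (hc : 0 ≤ c) (hr : 0 ≤ r) :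
    μ.prod volume (doubleCone c r) = ENNReal.ofReal
      (2 * c * (finrank ℝ E / (finrank ℝ E + 1) * μ.real (ball 0 1) * r ^ (finrank ℝ E + 1))) := by
  have hmeas : MeasurableSet (doubleCone (E := E) c r) :=
    ((isClosed_le continuous_fst.norm continuous_const).inter
      (isClosed_le continuous_snd.abs (continuous_const.mul continuous_fst.norm))).measurableSet
  have hfiber : ∀ y : E, volume (Prod.mk y ⁻¹' doubleCone c r) =
      (closedBall 0 r).indicator (fun y => ENNReal.ofReal (2 * c * ‖y‖)) y := by
    intro y
    by_cases hy : ‖y‖ ≤ r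
    · have : Prod.mk y ⁻¹' doubleCone c r = Icc (-(c * ‖y‖)) (c * ‖y‖) := by
        ext t; simp [doubleCone, hy, abs_le]
      rw [this, Real.volume_Icc, indicator_of_mem (mem_closedBall_zero_iff.2 hy)]
      ring_nf
    · have : Prod.mk y ⁻¹' doubleCone c r = ∅ := by
        ext t; simp [doubleCone, hy]
      rw [this, indicator_of_notMem (by simpa using hy), measure_empty]
  simp_rw [Measure.prod_apply hmeas, hfiber]
  rw [lintegral_indicator measurableSet_closedBall, ← ofReal_integral_eq_lintegral_ofReal,
    integral_const_mul, integral_norm_closedBall μ hr]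
  · exact ((continuous_const.mul continuous_norm).continuousOn).integrableOn_compact
      (isCompact_closedBall _ _)
  · exact Filter.Eventually.of_forall fun y => by positivity

def equatorialRegion (a : ℝ) : Set (E × ℝ) :=
  {p | a ^ 2 * p.2 ^ 2 ≤ ‖p.1‖ ^ 2 + p.2 ^ 2 ∧ ‖p.1‖ ^ 2 + p.2 ^ 2 ≤ 1}

theorem doubleCone_subset_equatorialRegion {a : ℝ} (ha : 1 < a) :
    doubleCone (√(a ^ 2 - 1))⁻¹ (√(a ^ 2 - 1) / a) ⊆ equatorialRegion (E := E) a := by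
  rintro ⟨y, t⟩ ⟨hy, ht⟩
  have hs2 : √(a ^ 2 - 1) ^ 2 = a ^ 2 - 1 := Real.sq_sqrt (by nlinarith)
  have hs : 0 < √(a ^ 2 - 1) := Real.sqrt_pos.2 (by nlinarith)
  have hst : (a ^ 2 - 1) * t ^ 2 ≤ ‖y‖ ^ 2 := by
    rw [← hs2, ← sq_abs t, ← mul_pow]
    exact pow_le_pow_left₀ (by positivity) ((le_inv_mul_iff₀ hs).1 ht) 2
  have hay : a ^ 2 * ‖y‖ ^ 2 ≤ a ^ 2 - 1 := by
    rw [← hs2, ← mul_pow]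
    exact pow_le_pow_left₀ (by positivity) ((le_div_iff₀' (by linarith)).1 hy) 2
  refine ⟨by nlinarith, le_of_mul_le_mul_left (a := a ^ 2 - 1) ?_ (by nlinarith)⟩
  nlinarith

theorem equatorialRegion_subset_doubleCone {a : ℝ} (ha : 1 < a) :
    equatorialRegion (E := E) a ⊆ doubleCone (√(a ^ 2 - 1))⁻¹ 1 := by
  rintro ⟨y, t⟩ ⟨hcone, hball⟩
  have hs2 : √(a ^ 2 - 1) ^ 2 = a ^ 2 - 1 := Real.sq_sqrt (by nlinarith)
  have hs : 0 < √(a ^ 2 - 1) := Real.sqrt_pos.2 (by nlinarith)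
  refine ⟨?_, (le_inv_mul_iff₀ hs).2 ?_⟩
  · rw [← sq_le_one_iff₀ (norm_nonneg y)]
    nlinarith
  · rw [← sq_le_sq₀ (by positivity) (norm_nonneg y), mul_pow, sq_abs, hs2]
    linarith

end DoubleCone

theorem abs_sub_le_of_le_div_of_mul_pow_le {J L ρ : ℝ} (m : ℕ) (hL : 0 ≤ L) (hρ : 1 / 2 ≤ ρ)
    (hρ1 : ρ ≤ 1) (hup : J ≤ L / ρ) (hlow : L * ρ ^ m ≤ J) :
    |J - L| ≤ (m + 2) * L * (1 - ρ ^ 2) := by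
  have hρρ : 1 - ρ ≤ 1 - ρ ^ 2 := by nlinarith
  have hbern : 1 - m * (1 - ρ) ≤ ρ ^ m := by
    have := one_add_mul_le_pow (a := ρ - 1) (by linarith) m
    rw [add_sub_cancel] at this
    linarith
  have hdiv : L / ρ ≤ L + 2 * L * (1 - ρ) := by
    rw [div_le_iff₀ (by linarith)]
    nlinarith [mul_nonneg (mul_nonneg hL (by linarith : 0 ≤ 2 * ρ - 1)) (sub_nonneg.2 hρ1)]
  have hm : (0 : ℝ) ≤ m := m.cast_nonneg
  rw [abs_le]
  constructor
  · nlinarith [mul_le_mul_of_nonneg_left hbern hL, mul_le_mul_of_nonneg_left hρρ (mul_nonneg hm hL)]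
  · nlinarith [mul_le_mul_of_nonneg_left hρρ hL,
      mul_nonneg (mul_nonneg hm hL) (by nlinarith : 0 ≤ 1 - ρ ^ 2)]


namespace EuclideanSpace

def splitZero (m : ℕ) : EuclideanSpace ℝ (Fin (m + 1)) ≃ᵐ EuclideanSpace ℝ (Fin m) × ℝ :=
  (MeasurableEquiv.toLp 2 (Fin (m + 1) → ℝ)).symm.trans <|
    (MeasurableEquiv.piFinSuccAbove (fun _ => ℝ) 0).trans <|
      MeasurableEquiv.prodComm.trans <|
        MeasurableEquiv.prodCongr (MeasurableEquiv.toLp 2 (Fin m → ℝ)) (MeasurableEquiv.refl ℝ)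

theorem splitZero_apply (m : ℕ) (x : EuclideanSpace ℝ (Fin (m + 1))) :
    splitZero m x = (WithLp.toLp 2 fun j => x j.succ, x 0) := rfl

theorem measurePreserving_splitZero (m : ℕ) : MeasurePreserving (splitZero m) := by
  have hswap : MeasurePreserving (MeasurableEquiv.prodComm : ℝ × (Fin m → ℝ) ≃ᵐ _) := by
    rw [Measure.volume_eq_prod, Measure.volume_eq_prod]
    exact Measure.measurePreserving_swap
  have htoLp : MeasurePreserving (MeasurableEquiv.prodCongr
      (MeasurableEquiv.toLp 2 (Fin m → ℝ)) (MeasurableEquiv.refl ℝ)) := by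
    rw [Measure.volume_eq_prod, Measure.volume_eq_prod]
    exact (volume_preserving_symm_measurableEquiv_toLp (Fin m)).symm.prod (MeasurePreserving.id _)
  exact htoLp.comp <| hswap.comp <| (volume_preserving_piFinSuccAbove _ 0).comp <|
    volume_preserving_symm_measurableEquiv_toLp _

theorem norm_sq_eq_splitZero (m : ℕ) (x : EuclideanSpace ℝ (Fin (m + 1))) :
    ‖x‖ ^ 2 = ‖(splitZero m x).1‖ ^ 2 + (splitZero m x).2 ^ 2 := by
  simp only [splitZero_apply, EuclideanSpace.norm_sq_eq, Fin.sum_univ_succ, Real.norm_eq_abs,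
    sq_abs]
  ring

end EuclideanSpace

def equatorialSector (m : ℕ) (a : ℝ) : Set (EuclideanSpace ℝ (Fin (m + 1))) :=
  {x | a * |x 0| ≤ ‖x‖ ∧ ‖x‖ ≤ 1}

section EquatorialSector

variable {m : ℕ}

theorem volume_equatorialSector {a : ℝ} (ha : 0 ≤ a) :
    volume (equatorialSector m a) =
      volume (equatorialRegion (E := EuclideanSpace ℝ (Fin m)) a) := by
  have hpre : equatorialSector m a = EuclideanSpace.splitZero m ⁻¹' equatorialRegion a := by
    ext x
    simp only [equatorialSector, equatorialRegion, mem_ofPred_eq, mem_preimage,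
      ← EuclideanSpace.norm_sq_eq_splitZero]
    rw [← sq_le_sq₀ (by positivity) (norm_nonneg x), ← sq_le_one_iff₀ (norm_nonneg x), mul_pow,
      sq_abs]
    rfl
  rw [hpre, (EuclideanSpace.measurePreserving_splitZero m).measure_preimage_equiv]

theorem abs_volume_equatorialSector_sub_le {a : ℝ} (ha : 2 ≤ a) :
    |(volume (equatorialSector m a)).toReal - 2 * (m / (m + 1)) * ballVol m * a⁻¹| ≤
      (m + 2) * (2 * (m / (m + 1)) * ballVol m * a⁻¹) * (a ^ 2)⁻¹ := by
  set K := 2 * ((m : ℝ) / (m + 1)) * ballVol m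
  set s := √(a ^ 2 - 1)
  have hs2 : s ^ 2 = a ^ 2 - 1 := Real.sq_sqrt (by nlinarith)
  have hs : 0 < s := Real.sqrt_pos.2 (by nlinarith)
  have hK : 0 ≤ K := by have := ballVol_pos m; positivity
  have ha0 : a ≠ 0 := by positivity
  have hcone : ∀ r, 0 ≤ r → volume (doubleCone (E := EuclideanSpace ℝ (Fin m)) s⁻¹ r) =
      ENNReal.ofReal (K * s⁻¹ * r ^ (m + 1)) := by
    intro r hr
    rw [Measure.volume_eq_prod, prod_volume_doubleCone volume (inv_nonneg.2 hs.le) hr,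
      finrank_euclideanSpace_fin]
    congr 1
    simp only [K, ballVol, Measure.real]
    ring
  have hup : volume (equatorialSector m a) ≤ ENNReal.ofReal (K * s⁻¹) := by
    rw [volume_equatorialSector (by linarith)]
    simpa using (measure_mono (equatorialRegion_subset_doubleCone (by linarith))).trans
      (hcone 1 zero_le_one).le
  have hlow : ENNReal.ofReal (K * s⁻¹ * (s / a) ^ (m + 1)) ≤ volume (equatorialSector m a) := by
    rw [volume_equatorialSector (by linarith), ← hcone _ (by positivity)]
    exact measure_mono (doubleCone_subset_equatorialRegion (by linarith))
  have hρ2 : 1 - (s / a) ^ 2 = (a ^ 2)⁻¹ := by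
    rw [div_pow, hs2]
    field_simp
    ring
  rw [← hρ2]
  refine abs_sub_le_of_le_div_of_mul_pow_le m (by positivity) ?_ ?_ ?_ ?_
  · rw [le_div_iff₀ (by linarith), ← sq_le_sq₀ (by linarith) hs.le, hs2]
    nlinarith
  · rw [div_le_one (by linarith), ← sq_le_sq₀ hs.le (by linarith), hs2]
    linarith
  · convert ENNReal.toReal_le_of_le_ofReal (by positivity) hup using 1
    field_simp
  · have hfin : volume (equatorialSector m a) ≠ ⊤ := (hup.trans_lt ENNReal.ofReal_lt_top).ne
    convert (ENNReal.ofReal_le_iff_le_toReal hfin).1 hlow using 1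
    rw [pow_succ]
    field_simp

theorem exists_abs_volume_equatorialSector_sub_le (hm : 1 ≤ m) :
    ∃ C : ℝ, 0 < C ∧ ∀ a : ℝ, 0 < a →
      |(volume (equatorialSector m a)).toReal - 2 * (m / (m + 1)) * ballVol m * a⁻¹| ≤
        C * (2 * (m / (m + 1)) * ballVol m * a⁻¹) * min 1 (a ^ 2)⁻¹ := by
  set K := 2 * ((m : ℝ) / (m + 1)) * ballVol m
  have hK : 0 < K := by
    have := ballVol_pos m
    have : (0 : ℝ) < m := by exact_mod_cast hm
    positivity
  set B := volume.real (closedBall (0 : EuclideanSpace ℝ (Fin (m + 1))) 1)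
  have hB : 0 ≤ B := measureReal_nonneg
  refine ⟨max (m + 2) (4 * (2 * B / K + 1)), by positivity, fun a ha => ?_⟩
  rcases le_or_gt 2 a with ha2 | ha2
  · calc _ ≤ (m + 2) * (K * a⁻¹) * (a ^ 2)⁻¹ := abs_volume_equatorialSector_sub_le ha2
      _ ≤ _ := by
        rw [min_eq_right (inv_le_one_of_one_le₀ (by nlinarith))]
        gcongr
        exact le_max_left _ _
  · have hJ : (volume (equatorialSector m a)).toReal ≤ B :=
      measureReal_mono (fun x hx => mem_closedBall_zero_iff.2 hx.2) measure_closedBall_lt_top.ne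
    have hmin : 4⁻¹ ≤ min 1 (a ^ 2)⁻¹ :=
      le_min (by norm_num) (inv_anti₀ (by positivity) (by nlinarith))
    calc _ ≤ B + K * a⁻¹ := by
          rw [abs_le]
          constructor <;> nlinarith [ENNReal.toReal_nonneg (a := volume (equatorialSector m a)),
            inv_pos.2 ha]
      _ ≤ 4 * (2 * B / K + 1) * (K * a⁻¹) * 4⁻¹ := by
          field_simp
          nlinarith
      _ ≤ _ := by gcongr; exact le_max_right _ _

end EquatorialSector

section Reduction

variable {F : Type*} [NormedAddCommGroup F] [InnerProductSpace ℝ F]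

theorem exists_orthonormalBasis_inner_eq [FiniteDimensional ℝ F] {n : ℕ}
    (hF : finrank ℝ F = n + 1) {v : F} (hv : v ≠ 0) :
    ∃ b : OrthonormalBasis (Fin (n + 1)) ℝ F, ∀ t, ⟪v, t⟫ = ‖v‖ * b.repr t 0 := by
  have hu : Orthonormal ℝ (({0} : Set (Fin (n + 1))).domRestrict fun _ => ‖v‖⁻¹ • v) := by
    refine ⟨fun _ => norm_smul_inv_norm hv, fun i j hij => (hij ?_).elim⟩
    exact Subtype.ext (i.2.trans j.2.symm)
  obtain ⟨b, hb⟩ := hu.exists_orthonormalBasis_extension_of_card_eq (by simpa using hF)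
  refine ⟨b, fun t => ?_⟩
  rw [b.repr_apply_apply, hb 0 rfl, real_inner_smul_left, ← mul_assoc,
    mul_inv_cancel₀ (norm_ne_zero_iff.2 hv), one_mul]

theorem volume_abs_inner_le_norm_le_one [FiniteDimensional ℝ F] [MeasurableSpace F]
    [BorelSpace F] {n : ℕ} (hF : finrank ℝ F = n + 1) {v : F} (hv : v ≠ 0) :
    volume {t : F | |⟪v, t⟫| ≤ ‖t‖ ∧ ‖t‖ ≤ 1} = volume (equatorialSector n ‖v‖) := by
  obtain ⟨b, hb⟩ := exists_orthonormalBasis_inner_eq hF hv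
  have hpre : {t : F | |⟪v, t⟫| ≤ ‖t‖ ∧ ‖t‖ ≤ 1} = b.repr ⁻¹' equatorialSector n ‖v‖ := by
    ext t
    simp [equatorialSector, hb, abs_mul]
  have hmeas : MeasurableSet (equatorialSector n ‖v‖) :=
    ((isClosed_le (by fun_prop) continuous_norm).inter
      (isClosed_le continuous_norm continuous_const)).measurableSet
  rw [hpre, b.measurePreserving_repr.measure_preimage hmeas.nullMeasurableSet]

theorem sq_norm_mul_sq_norm_orthogonalProjectionOnto (w z : F) :
    ‖w‖ ^ 2 * ‖(ℝ ∙ w)ᗮ.orthogonalProjectionOnto z‖ ^ 2 = ‖w‖ ^ 2 * ‖z‖ ^ 2 - ⟪w, z⟫ ^ 2 := by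
  rcases eq_or_ne w 0 with rfl | hw
  · simp
  have hpar : ‖w‖ ^ 2 * ‖(ℝ ∙ w).orthogonalProjectionOnto z‖ ^ 2 = ⟪w, z⟫ ^ 2 := by
    have hproj : ‖(ℝ ∙ w).orthogonalProjectionOnto z‖ = ‖(ℝ ∙ w).starProjection z‖ := rfl
    rw [hproj, Submodule.starProjection_singleton, RCLike.ofReal_real_eq_id, id, norm_smul,
      Real.norm_eq_abs, mul_pow, sq_abs]
    field_simp
  rw [Submodule.norm_sq_eq_add_norm_sq_projection z (ℝ ∙ w), mul_add, hpar]
  ring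

theorem orthogonalProjectionOnto_orthogonal_span_ne_zero {w z : F}
    (hwz : LinearIndependent ℝ ![w, z]) : (ℝ ∙ w)ᗮ.orthogonalProjectionOnto z ≠ 0 := by
  rw [Ne, Submodule.orthogonalProjectionOnto_eq_zero_iff, Submodule.orthogonal_orthogonal,
    Submodule.mem_span_singleton]
  rintro ⟨c, rfl⟩
  simpa using LinearIndependent.pair_iff.1 hwz c (-1) (by simp)

end Reduction

theorem Ivol_eq_volume_equatorialSector {N : ℕ} (hN : 2 ≤ N) {w z : EuclideanSpace ℝ (Fin N)}
    (hwz : LinearIndependent ℝ ![w, z]) :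
    Ivol N w z =
      (volume (equatorialSector (N - 2) ‖(ℝ ∙ w)ᗮ.orthogonalProjectionOnto z‖)).toReal := by
  have hw : w ≠ 0 := hwz.ne_zero 0
  have hdim : finrank ℝ (ℝ ∙ w)ᗮ = N - 2 + 1 := by
    have := Submodule.finrank_add_finrank_orthogonal (ℝ ∙ w)
    rw [finrank_span_singleton hw, finrank_euclideanSpace_fin] at this
    omega
  rw [Ivol, ← volume_abs_inner_le_norm_le_one hdim
    (orthogonalProjectionOnto_orthogonal_span_ne_zero hwz)]
  simp_rw [Submodule.inner_orthogonalProjectionOnto_eq_of_mem_right]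

/-- Let `N ≥ 3` and `w, z ∈ ℝ^N` linearly independent; set
`δ = ‖w‖²‖z‖² − ⟨w,z⟩²`. Then
`I(w,z) = 2·((N−2)/(N−1))·V_{N−2}·(‖w‖/δ^{1/2})·(1 + O(min{1, ‖w‖²/δ}))`,
with implied constant depending only on `N`. -/
theorem stmt13 (N : ℕ) (hN : 3 ≤ N) :
    ∃ C : ℝ, 0 < C ∧ ∀ w z : EuclideanSpace ℝ (Fin N), LinearIndependent ℝ ![w, z] →
      |Ivol N w z -
          2 * (((N : ℝ) - 2) / ((N : ℝ) - 1)) * ballVol (N - 2) *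
            (‖w‖ / Real.sqrt (‖w‖ ^ 2 * ‖z‖ ^ 2 - (inner ℝ w z : ℝ) ^ 2))| ≤
        C * (2 * (((N : ℝ) - 2) / ((N : ℝ) - 1)) * ballVol (N - 2) *
            (‖w‖ / Real.sqrt (‖w‖ ^ 2 * ‖z‖ ^ 2 - (inner ℝ w z : ℝ) ^ 2))) *
          min 1 (‖w‖ ^ 2 / (‖w‖ ^ 2 * ‖z‖ ^ 2 - (inner ℝ w z : ℝ) ^ 2)) := by
  obtain ⟨C, hC, hest⟩ := exists_abs_volume_equatorialSector_sub_le (m := N - 2) (by omega)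
  refine ⟨C, hC, fun w z hwz => ?_⟩
  set a := ‖(ℝ ∙ w)ᗮ.orthogonalProjectionOnto z‖
  have ha : 0 < a := norm_pos_iff.2 (orthogonalProjectionOnto_orthogonal_span_ne_zero hwz)
  have hw : ‖w‖ ≠ 0 := norm_ne_zero_iff.2 (hwz.ne_zero 0)
  have hδ : ‖w‖ ^ 2 * ‖z‖ ^ 2 - ⟪w, z⟫ ^ 2 = (‖w‖ * a) ^ 2 := by
    rw [mul_pow, sq_norm_mul_sq_norm_orthogonalProjectionOnto]
  have hN2 : ((N - 2 : ℕ) : ℝ) = N - 2 := by push_cast [show 2 ≤ N by omega]; ring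
  rw [Ivol_eq_volume_equatorialSector (by omega) hwz, hδ, Real.sqrt_sq (by positivity),
    show ‖w‖ / (‖w‖ * a) = a⁻¹ by field_simp,
    show ‖w‖ ^ 2 / (‖w‖ * a) ^ 2 = (a ^ 2)⁻¹ by field_simp,
    show (N : ℝ) - 1 = (N - 2 : ℝ) + 1 by ring, ← hN2]
  exact hest a ha
end
end

section
/- Let d ≥ 2, n ≥ 3, p prime, r ≥ 1, e ∈ {0,…,r}. Suppose a ∈ (ℤ/p^rℤ)^{N_{d,n}} has at least one unit coordinate and there exists x ∈ (ℤ/p^rℤ)^{n+1} with at least one unit coordinate such that f_a(x) ≡ 0 mod p^r and v_p(∇f_a(x)) = e. Then σ(a; p^r) ≥ p^{−(e+1)n}, where σ(a; p^r) = p^{−rn} · #{ b ∈ (ℤ/p^rℤ)^{n+1} : b has a unit coordinate and f_a(b) ≡ 0 mod p^r }. -/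
noncomputable section

/-- The degree-`d` form with coefficient vector `a`, evaluated at `x`. -/
def evalForm {n d M : ℕ} (a : MonIdx n d → ZMod M) (x : Fin (n + 1) → ZMod M) : ZMod M :=
  ∑ m : MonIdx n d, a m * ∏ i, x i ^ (m.1 i)

/-- The `j`-th partial derivative of the form `f_a`, evaluated at `x`. -/
def gradForm {n d M : ℕ} (a : MonIdx n d → ZMod M) (x : Fin (n + 1) → ZMod M)
    (j : Fin (n + 1)) : ZMod M :=
  ∑ m : MonIdx n d, a m * (m.1 j : ZMod M) *
    ∏ i, x i ^ (m.1 i - if i = j then 1 else 0)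

/-- The `p`-adic valuation of a vector `v ∈ (ℤ/p^rℤ)^{n+1}`. -/
def vecVal {n : ℕ} (p r : ℕ) (v : Fin (n + 1) → ZMod (p ^ r)) : ℕ :=
  sSup {e : ℕ | e ≤ r ∧ ∀ k, ((p : ZMod (p ^ r)) ^ e ∣ v k)}

/-- The local density `σ(a; p^r)`. -/
def sigmaLoc (n d p r : ℕ) (a : MonIdx n d → ZMod (p ^ r)) : ℝ :=
  (Nat.card {b : Fin (n + 1) → ZMod (p ^ r) //
      (∃ k, IsUnit (b k)) ∧ evalForm a b = 0} : ℝ) / (p : ℝ) ^ (r * n)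

/-!
Pick a coordinate `j` with `p^(e+1) ∤ ∂_j f(x)`. For every perturbation `u ≡ 0 mod p^(e+1)`,
the first-order Taylor expansion gives `f(x + u) ≡ 0 mod p^(2e+1)`, while `∂_j f(x + u)` still
has valuation `≤ e`. Hensel's lemma over `ℤ_p`, applied to `f` restricted to the `j`-th
coordinate line through `x + u`, then moves the `j`-th coordinate to a zero of `f` congruent to
`x` mod `p`, hence primitive. The `n` remaining coordinates of `u` range over `p^((r-e-1) n)`
values and give distinct zeros.
-/

open Polynomial

section Expansion

variable {R : Type*} [CommRing R]

theorem sq_dvd_add_pow_sub (c x u : R) (hu : c ∣ u) (m : ℕ) :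
    c ^ 2 ∣ (x + u) ^ m - x ^ m - m * u * x ^ (m - 1) := by
  obtain ⟨v, rfl⟩ := hu
  obtain ⟨k, hk⟩ := binomExpansion (X ^ m : R[X]) x (c * v)
  simp only [eval_pow, eval_X, derivative_X_pow, eval_mul, eval_C] at hk
  exact ⟨k * v ^ 2, by rw [hk]; ring⟩

theorem sq_dvd_prod_add_sub {ι : Type*} [DecidableEq ι] (c : R) (s : Finset ι) (F G H : ι → R)
    (hF : ∀ i ∈ s, c ^ 2 ∣ F i - G i - H i) (hH : ∀ i ∈ s, c ∣ H i) :
    c ^ 2 ∣ ∏ i ∈ s, F i - ∏ i ∈ s, G i - ∑ j ∈ s, H j * ∏ i ∈ s.erase j, G i := by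
  induction s using Finset.induction_on with
  | empty => simp
  | insert k s hk ih =>
    obtain ⟨A, hA⟩ := hF k (s.mem_insert_self k)
    obtain ⟨B, hB⟩ := ih (fun i hi => hF i (Finset.mem_insert_of_mem hi))
      (fun i hi => hH i (Finset.mem_insert_of_mem hi))
    obtain ⟨h, hh⟩ := hH k (s.mem_insert_self k)
    obtain ⟨S, hS⟩ : c ∣ ∑ j ∈ s, H j * ∏ i ∈ s.erase j, G i :=
      Finset.dvd_sum fun j hj => (hH j (Finset.mem_insert_of_mem hj)).mul_right _
    have herase : ∑ j ∈ s, H j * ∏ i ∈ (insert k s).erase j, G i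
        = G k * ∑ j ∈ s, H j * ∏ i ∈ s.erase j, G i := by
      rw [Finset.mul_sum]
      refine Finset.sum_congr rfl fun j hj => ?_
      rw [Finset.erase_insert_of_ne (by rintro rfl; exact hk hj),
        Finset.prod_insert (fun h => hk (Finset.mem_of_mem_erase h))]
      ring
    rw [Finset.prod_insert hk, Finset.prod_insert hk, Finset.sum_insert hk,
      Finset.erase_insert hk, herase]
    exact ⟨A * ∏ i ∈ s, F i + (G k + H k) * B + h * S, by
      linear_combination (∏ i ∈ s, F i) * hA + (G k + H k) * hB + (c * S) * hh +
        H k * hS⟩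

theorem prod_pow_sub_ite_eq {ι : Type*} [Fintype ι] [DecidableEq ι] (x : ι → R) (m : ι → ℕ)
    (j : ι) :
    ∏ i, x i ^ (m i - if i = j then 1 else 0) =
      x j ^ (m j - 1) * ∏ i ∈ Finset.univ.erase j, x i ^ m i := by
  rw [← Finset.mul_prod_erase Finset.univ _ (Finset.mem_univ j), if_pos rfl]
  congr 1
  exact Finset.prod_congr rfl fun i hi => by rw [if_neg (Finset.ne_of_mem_erase hi), Nat.sub_zero]

theorem prod_erase_update_pow {ι : Type*} [Fintype ι] [DecidableEq ι] (y : ι → R) (m : ι → ℕ)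
    (j : ι) (t : R) :
    ∏ i ∈ Finset.univ.erase j, Function.update y j t i ^ m i =
      ∏ i ∈ Finset.univ.erase j, y i ^ m i :=
  Finset.prod_congr rfl fun i hi => by rw [Function.update_of_ne (Finset.ne_of_mem_erase hi)]

theorem prod_update_pow_eq {ι : Type*} [Fintype ι] [DecidableEq ι] (y : ι → R) (m : ι → ℕ)
    (j : ι) (t : R) :
    ∏ i, Function.update y j t i ^ m i = t ^ m j * ∏ i ∈ Finset.univ.erase j, y i ^ m i := by
  rw [← Finset.mul_prod_erase Finset.univ _ (Finset.mem_univ j), Function.update_self,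
    prod_erase_update_pow]

end Expansion

section Form

variable {n d M : ℕ} (a : MonIdx n d → ZMod M)

theorem sq_dvd_evalForm_add_sub (x u : Fin (n + 1) → ZMod M) (c : ZMod M) (hu : ∀ i, c ∣ u i) :
    c ^ 2 ∣ evalForm a (x + u) - evalForm a x - ∑ j, u j * gradForm a x j := by
  have hgrad : ∑ j, u j * gradForm a x j = ∑ m : MonIdx n d, a m *
      ∑ j, (m.1 j * u j * x j ^ (m.1 j - 1)) * ∏ i ∈ Finset.univ.erase j, x i ^ m.1 i := by
    simp only [gradForm, Finset.mul_sum, prod_pow_sub_ite_eq]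
    rw [Finset.sum_comm]
    exact Finset.sum_congr rfl fun m _ => Finset.sum_congr rfl fun j _ => by ring
  rw [hgrad, evalForm, evalForm, ← Finset.sum_sub_distrib, ← Finset.sum_sub_distrib]
  refine Finset.dvd_sum fun m _ => ?_
  obtain ⟨W, hW⟩ := sq_dvd_prod_add_sub c Finset.univ (fun i => (x i + u i) ^ m.1 i)
    (fun i => x i ^ m.1 i) (fun i => m.1 i * u i * x i ^ (m.1 i - 1))
    (fun i _ => sq_dvd_add_pow_sub c (x i) (u i) (hu i) (m.1 i))
    (fun i _ => ((hu i).mul_left _).mul_right _)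
  exact ⟨a m * W, by simp only [Pi.add_apply]; linear_combination a m * hW⟩

theorem dvd_gradForm_add_sub (x u : Fin (n + 1) → ZMod M) (c : ZMod M) (hu : ∀ i, c ∣ u i)
    (j : Fin (n + 1)) : c ∣ gradForm a (x + u) j - gradForm a x j := by
  have hu' : ∀ i, Ideal.Quotient.mk (Ideal.span {c}) (u i) = 0 := fun i =>
    Ideal.Quotient.eq_zero_iff_mem.2 (Ideal.mem_span_singleton.2 (hu i))
  rw [← Ideal.mem_span_singleton, ← Ideal.Quotient.eq_zero_iff_mem, map_sub, sub_eq_zero]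
  simp only [gradForm, map_sum, map_mul, map_prod, map_pow, map_natCast, Pi.add_apply, map_add,
    hu', add_zero]

def linePoly (y : Fin (n + 1) → ZMod M) (j : Fin (n + 1)) : (ZMod M)[X] :=
  ∑ m : MonIdx n d, C (a m * ∏ i ∈ Finset.univ.erase j, y i ^ m.1 i) * X ^ m.1 j

theorem eval_linePoly (y : Fin (n + 1) → ZMod M) (j : Fin (n + 1)) (t : ZMod M) :
    (linePoly a y j).eval t = evalForm a (Function.update y j t) := by
  simp only [linePoly, evalForm, eval_finsetSum, eval_mul, eval_C, eval_pow, eval_X,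
    prod_update_pow_eq]
  exact Finset.sum_congr rfl fun m _ => by ring

theorem eval_derivative_linePoly (y : Fin (n + 1) → ZMod M) (j : Fin (n + 1)) (t : ZMod M) :
    (linePoly a y j).derivative.eval t = gradForm a (Function.update y j t) j := by
  simp only [linePoly, gradForm, derivative_sum, derivative_C_mul_X_pow, eval_finsetSum,
    eval_mul, eval_C, eval_pow, eval_X, prod_pow_sub_ite_eq, Function.update_self,
    prod_erase_update_pow]
  exact Finset.sum_congr rfl fun m _ => by ring

end Form

section Hensel

variable {p : ℕ} [Fact p.Prime]

theorem PadicInt.pow_dvd_of_pow_dvd_toZModPow {r s : ℕ} (hs : s ≤ r) {w : ℤ_[p]}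
    (h : (p : ZMod (p ^ r)) ^ s ∣ PadicInt.toZModPow r w) : (p : ℤ_[p]) ^ s ∣ w := by
  obtain ⟨c, hc⟩ := h
  rw [← Ideal.mem_span_singleton, ← PadicInt.ker_toZModPow, RingHom.mem_ker,
    ← PadicInt.zmod_cast_comp_toZModPow s r hs, RingHom.comp_apply, hc, map_mul, map_pow,
    map_natCast, ← Nat.cast_pow, ZMod.natCast_self, zero_mul]

theorem ZMod.exists_root_of_pow_dvd_eval {r e : ℕ} (F : (ZMod (p ^ r))[X]) (y : ZMod (p ^ r))
    (hF : (p : ZMod (p ^ r)) ^ (2 * e + 1) ∣ F.eval y)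
    (hF' : ¬ (p : ZMod (p ^ r)) ^ (e + 1) ∣ F.derivative.eval y) :
    ∃ z, F.eval z = 0 ∧ (p : ZMod (p ^ r)) ∣ z - y := by
  rcases le_or_gt r (2 * e + 1) with hr | hr
  · refine ⟨y, ?_, by simp⟩
    rwa [← Nat.cast_pow, (ZMod.natCast_eq_zero_iff _ _).2 (pow_dvd_pow p hr), zero_dvd_iff] at hF
  -- Lift to `ℤ_p`, where `‖G(Y)‖ ≤ p^(-(2e+1)) < p^(-2e) ≤ ‖G'(Y)‖^2`.
  set π := PadicInt.toZModPow (p := p) r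
  obtain ⟨G, rfl⟩ := map_surjective π (ZMod.ringHom_surjective π) F
  obtain ⟨Y, rfl⟩ := ZMod.ringHom_surjective π y
  rw [eval_map, eval₂_hom] at hF
  rw [derivative_map, eval_map, eval₂_hom] at hF'
  have hGY : ‖G.eval Y‖ ≤ (p : ℝ) ^ (-((2 * e + 1 : ℕ) : ℤ)) :=
    (PadicInt.norm_le_pow_iff_mem_span_pow _ _).2
      (Ideal.mem_span_singleton.2 (PadicInt.pow_dvd_of_pow_dvd_toZModPow hr.le hF))
  have hG'Y : (p : ℝ) ^ (-(e : ℤ)) ≤ ‖G.derivative.eval Y‖ := by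
    by_contra! hlt
    rw [PadicInt.norm_lt_pow_iff_norm_le_pow_sub_one,
      show -(e : ℤ) - 1 = -((e + 1 : ℕ) : ℤ) by push_cast; ring,
      PadicInt.norm_le_pow_iff_mem_span_pow, Ideal.mem_span_singleton] at hlt
    exact hF' (by simpa using map_dvd π hlt)
  have hp : (1 : ℝ) < p := by exact_mod_cast (Fact.out : p.Prime).one_lt
  obtain ⟨z, hz, hzY, -⟩ := hensels_lemma (F := G) (a := Y) <| by
    simp only [coe_aeval_eq_eval]
    calc ‖G.eval Y‖ ≤ (p : ℝ) ^ (-((2 * e + 1 : ℕ) : ℤ)) := hGY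
      _ < ((p : ℝ) ^ (-(e : ℤ))) ^ 2 := by
        rw [← zpow_natCast, ← zpow_mul]
        exact zpow_lt_zpow_right₀ hp (by push_cast; omega)
      _ ≤ ‖G.derivative.eval Y‖ ^ 2 := pow_le_pow_left₀ (by positivity) hG'Y 2
  refine ⟨π z, by rw [eval_map, eval₂_hom, ← coe_aeval_eq_eval, hz, map_zero], ?_⟩
  have hzY' : (p : ℤ_[p]) ∣ z - Y :=
    (PadicInt.norm_lt_one_iff_dvd _).1 (hzY.trans_le (PadicInt.norm_le_one _))
  simpa using map_dvd π hzY'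

end Hensel

section PrimitiveZeros

variable {n d p r : ℕ}

theorem pow_dvd_of_vecVal_eq {e : ℕ} {v : Fin (n + 1) → ZMod (p ^ r)} (h : vecVal p r v = e)
    (k : Fin (n + 1)) : (p : ZMod (p ^ r)) ^ e ∣ v k := by
  have hmem := Nat.sSup_mem (s := {e : ℕ | e ≤ r ∧ ∀ k, ((p : ZMod (p ^ r)) ^ e ∣ v k)})
    ⟨0, Nat.zero_le r, fun k => by simp⟩ ⟨r, fun _ he => he.1⟩
  exact h ▸ hmem.2 k

theorem exists_not_pow_succ_dvd_of_vecVal_eq {e : ℕ} {v : Fin (n + 1) → ZMod (p ^ r)}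
    (h : vecVal p r v = e) (her : e < r) : ∃ j, ¬ (p : ZMod (p ^ r)) ^ (e + 1) ∣ v j := by
  by_contra! hall
  have : e + 1 ≤ vecVal p r v := le_csSup ⟨r, fun _ he => he.1⟩ ⟨her, hall⟩
  omega

theorem ZMod.isUnit_add_of_natCast_dvd {z w : ZMod (p ^ r)} (hz : IsUnit z)
    (hw : (p : ZMod (p ^ r)) ∣ w) : IsUnit (z + w) := by
  obtain ⟨c, rfl⟩ := hw
  have hp : IsNilpotent (p : ZMod (p ^ r)) := ⟨r, by rw [← Nat.cast_pow, ZMod.natCast_self]⟩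
  exact ((Commute.all _ _).isNilpotent_mul_right hp).isUnit_add_left_of_commute hz
    (Commute.all _ _)

theorem injective_pow_mul_val (hp : p ≠ 0) {s : ℕ} (hs : s ≤ r) :
    Function.Injective fun z : ZMod (p ^ (r - s)) =>
      (p : ZMod (p ^ r)) ^ s * (z.val : ZMod (p ^ r)) := by
  have : NeZero (p ^ (r - s)) := ⟨pow_ne_zero _ hp⟩
  intro z z' h
  simp only [← Nat.cast_pow, ← Nat.cast_mul, ZMod.natCast_eq_natCast_iff] at h
  rw [← pow_mul_pow_sub p hs] at h
  exact ZMod.val_injective _ ((Nat.ModEq.mul_left_cancel' (pow_ne_zero _ hp) h).eq_of_lt_of_lt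
    (ZMod.val_lt z) (ZMod.val_lt z'))

theorem exists_zero_update_add [Fact p.Prime] {e : ℕ} (a : MonIdx n d → ZMod (p ^ r))
    (x u : Fin (n + 1) → ZMod (p ^ r)) (j : Fin (n + 1)) (hfx : evalForm a x = 0)
    (hgrad : ∀ k, (p : ZMod (p ^ r)) ^ e ∣ gradForm a x k)
    (hj : ¬ (p : ZMod (p ^ r)) ^ (e + 1) ∣ gradForm a x j)
    (hu : ∀ i, (p : ZMod (p ^ r)) ^ (e + 1) ∣ u i) :
    ∃ ρ, (p : ZMod (p ^ r)) ∣ ρ - (x + u) j ∧ evalForm a (Function.update (x + u) j ρ) = 0 := by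
  have hpow : (p : ZMod (p ^ r)) ^ (2 * e + 1) = (p : ZMod (p ^ r)) ^ (e + 1) * p ^ e := by
    rw [← pow_add]; ring_nf
  have hf : (p : ZMod (p ^ r)) ^ (2 * e + 1) ∣ evalForm a (x + u) := by
    have htaylor := sq_dvd_evalForm_add_sub a x u _ hu
    rw [hfx, sub_zero] at htaylor
    have hlin : (p : ZMod (p ^ r)) ^ (2 * e + 1) ∣ ∑ k, u k * gradForm a x k :=
      Finset.dvd_sum fun k _ => hpow ▸ mul_dvd_mul (hu k) (hgrad k)
    have hsq : (p : ZMod (p ^ r)) ^ (2 * e + 1) ∣ ((p : ZMod (p ^ r)) ^ (e + 1)) ^ 2 :=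
      ⟨p, by ring⟩
    simpa using dvd_add (hsq.trans htaylor) hlin
  have hf' : ¬ (p : ZMod (p ^ r)) ^ (e + 1) ∣ gradForm a (x + u) j := fun h =>
    hj (by simpa using dvd_sub h (dvd_gradForm_add_sub a x u _ hu j))
  obtain ⟨ρ, hρ, hclose⟩ := ZMod.exists_root_of_pow_dvd_eval (linePoly a (x + u) j) ((x + u) j)
    (by rwa [eval_linePoly, Function.update_eq_self])
    (by rwa [eval_derivative_linePoly, Function.update_eq_self])
  exact ⟨ρ, hclose, by rwa [← eval_linePoly]⟩

theorem pow_le_card_primitive_zeros (hp : p ≠ 0) {e : ℕ} (her : e < r)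
    (a : MonIdx n d → ZMod (p ^ r)) (x : Fin (n + 1) → ZMod (p ^ r)) (hx : ∃ k, IsUnit (x k))
    (j : Fin (n + 1))
    (hsol : ∀ u : Fin (n + 1) → ZMod (p ^ r), (∀ i, (p : ZMod (p ^ r)) ^ (e + 1) ∣ u i) →
      ∃ ρ, (p : ZMod (p ^ r)) ∣ ρ - (x + u) j ∧ evalForm a (Function.update (x + u) j ρ) = 0) :
    p ^ ((r - (e + 1)) * n) ≤
      Nat.card {b : Fin (n + 1) → ZMod (p ^ r) // (∃ k, IsUnit (b k)) ∧ evalForm a b = 0} := by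
  have : NeZero (p ^ r) := ⟨pow_ne_zero _ hp⟩
  choose ρ hρ hzero using hsol
  let φ (z : ZMod (p ^ (r - (e + 1)))) : ZMod (p ^ r) := (p : ZMod (p ^ r)) ^ (e + 1) * z.val
  let U (g : Fin n → ZMod (p ^ (r - (e + 1)))) : Fin (n + 1) → ZMod (p ^ r) :=
    j.insertNth 0 (φ ∘ g)
  have hU g i : (p : ZMod (p ^ r)) ^ (e + 1) ∣ U g i := by
    obtain rfl | ⟨i, rfl⟩ := j.eq_self_or_eq_succAbove i
    · simp [U]
    · simp [U, φ]
  let b g := Function.update (x + U g) j (ρ (U g) (hU g))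
  have hb_sub g k : (p : ZMod (p ^ r)) ∣ b g k - x k := by
    have hpU : (p : ZMod (p ^ r)) ∣ U g k := (dvd_pow_self _ e.succ_ne_zero).trans (hU g k)
    by_cases hk : k = j
    · subst hk
      simpa [b, sub_add] using dvd_add (hρ (U g) (hU g)) hpU
    · simpa [b, Function.update_of_ne hk] using hpU
  have hb_unit g : ∃ k, IsUnit (b g k) := by
    obtain ⟨k, hk⟩ := hx
    exact ⟨k, by simpa using ZMod.isUnit_add_of_natCast_dvd hk (hb_sub g k)⟩
  have hb_inj : Function.Injective b := fun g g' h => funext fun i => by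
    have hi := congrFun h (j.succAbove i)
    simp only [b, Function.update_of_ne (j.succAbove_ne i), Pi.add_apply, add_right_inj, U,
      Fin.insertNth_apply_succAbove, Function.comp_apply] at hi
    exact injective_pow_mul_val hp her hi
  calc p ^ ((r - (e + 1)) * n) = Nat.card (Fin n → ZMod (p ^ (r - (e + 1)))) := by
        rw [Nat.card_fun, Nat.card_zmod, Nat.card_eq_fintype_card, Fintype.card_fin, ← pow_mul]
    _ ≤ _ := Nat.card_le_card_of_injective (fun g => ⟨b g, hb_unit g, hzero _ _⟩)
        fun g g' h => hb_inj (congrArg Subtype.val h)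

theorem inv_pow_le_sigmaLoc_of_pow_le_card (hp : 0 < p) {s : ℕ} (a : MonIdx n d → ZMod (p ^ r))
    (h : p ^ ((r - s) * n) ≤
      Nat.card {b : Fin (n + 1) → ZMod (p ^ r) // (∃ k, IsUnit (b k)) ∧ evalForm a b = 0}) :
    ((p : ℝ) ^ (s * n))⁻¹ ≤ sigmaLoc n d p r a := by
  have hp1 : (1 : ℝ) ≤ p := by exact_mod_cast hp
  rw [sigmaLoc, le_div_iff₀ (by positivity), inv_mul_le_iff₀ (by positivity)]
  calc (p : ℝ) ^ (r * n) ≤ (p : ℝ) ^ (s * n + (r - s) * n) :=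
        pow_le_pow_right₀ hp1 (by rw [← add_mul]; exact Nat.mul_le_mul_right _ (by omega))
    _ ≤ _ := by rw [pow_add]; gcongr; exact_mod_cast h

end PrimitiveZeros

theorem stmt18_general (d n : ℕ) (p r e : ℕ) (hp : p.Prime)
    (a : MonIdx n d → ZMod (p ^ r))
    (hx : ∃ x : Fin (n + 1) → ZMod (p ^ r), (∃ k, IsUnit (x k)) ∧
      evalForm a x = 0 ∧ vecVal p r (gradForm a x) = e) :
    ((p : ℝ) ^ ((e + 1) * n))⁻¹ ≤ sigmaLoc n d p r a := by
  have : Fact p.Prime := ⟨hp⟩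
  have : NeZero (p ^ r) := ⟨pow_ne_zero _ hp.ne_zero⟩
  obtain ⟨x, hxunit, hfx, hval⟩ := hx
  refine inv_pow_le_sigmaLoc_of_pow_le_card hp.pos a ?_
  rcases lt_or_ge e r with her | her
  · obtain ⟨j, hj⟩ := exists_not_pow_succ_dvd_of_vecVal_eq hval her
    exact pow_le_card_primitive_zeros hp.ne_zero her a x hxunit j fun u hu =>
      exists_zero_update_add a x u j hfx (pow_dvd_of_vecVal_eq hval) hj hu
  · have : Nonempty {b // (∃ k, IsUnit (b k)) ∧ evalForm a b = 0} := ⟨⟨x, hxunit, hfx⟩⟩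
    rw [Nat.sub_eq_zero_of_le (by omega), zero_mul, pow_zero]
    exact Nat.card_pos

/-- Let `d ≥ 2`, `n ≥ 3`, `p` prime, `r ≥ 1`, `e ∈ {0,…,r}`. If
`a ∈ (ℤ/p^rℤ)^{N_{d,n}}` has a unit coordinate and there is `x ∈ (ℤ/p^rℤ)^{n+1}` with a
unit coordinate such that `f_a(x) = 0` and `v_p(∇f_a(x)) = e`, then
`σ(a; p^r) ≥ p^{−(e+1)n}`. -/
theorem stmt18 (d n : ℕ) (hd : 2 ≤ d) (hn : 3 ≤ n) (p r e : ℕ) (hp : p.Prime)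
    (hr : 1 ≤ r) (her : e ≤ r) (a : MonIdx n d → ZMod (p ^ r))
    (ha : ∃ k, IsUnit (a k))
    (hx : ∃ x : Fin (n + 1) → ZMod (p ^ r), (∃ k, IsUnit (x k)) ∧
      evalForm a x = 0 ∧ vecVal p r (gradForm a x) = e) :
    ((p : ℝ) ^ ((e + 1) * n))⁻¹ ≤ sigmaLoc n d p r a :=
  stmt18_general d n p r e hp a hx
end
end
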